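/- The binary octahedral group 𝒪 admits the presentation ⟨T, U | T U² T = U², T U T = U T U⟩ via the isomorphism sending T to (1+i)/√2 and U to (1+j)/√2; in particular the quaternions T = (1+i)/√2 and U = (1+j)/√2 satisfy T U² T = U² and T U T = U T U. -/

import Mathlib

open Quaternion

noncomputable def qi : ℍ[ℝ] := ⟨0, 1, 0, 0⟩
noncomputable def qj : ℍ[ℝ] := ⟨0, 0, 1, 0⟩
noncomputable def ϖ : ℍ[ℝ] := ⟨-(1/2), 1/2, 1/2, 1/2⟩
/-- `T = (1+i)/√2`. -/
noncomputable def Tq : ℍ[ℝ] := ((Real.sqrt 2 : ℝ) : ℍ[ℝ])⁻¹ * (1 + qi)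
/-- `U = (1+j)/√2`. -/
noncomputable def Uq : ℍ[ℝ] := ((Real.sqrt 2 : ℝ) : ℍ[ℝ])⁻¹ * (1 + qj)

noncomputable def uϖ : ℍ[ℝ]ˣ := Units.mk0 ϖ (by
  intro h
  have h' := congrArg (fun x : ℍ[ℝ] => x.re) h
  norm_num [ϖ] at h')
noncomputable def uγ : ℍ[ℝ]ˣ := Units.mk0 Tq (by
  refine mul_ne_zero (inv_ne_zero ?_) ?_
  · rw [show ((0:ℍ[ℝ])) = ((0:ℝ):ℍ[ℝ]) from rfl, Ne, Quaternion.coe_inj]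
    exact Real.sqrt_ne_zero'.mpr (by norm_num : (0:ℝ) < 2)
  · intro h
    have h' := congrArg (fun x : ℍ[ℝ] => x.re) h
    change (1:ℝ) + 0 = 0 at h'
    norm_num at h')

/-- The binary octahedral group `𝒪 = ⟨ϖ, γ⟩`. -/
noncomputable def binO : Subgroup ℍ[ℝ]ˣ := Subgroup.closure {uϖ, uγ}

/-- The relations `T U² T = U²` and `T U T = U T U` in the free group on two generators. -/
def octRels : Set (FreeGroup (Fin 2)) :=
  { FreeGroup.of 0 * FreeGroup.of 1 ^ 2 * FreeGroup.of 0 * (FreeGroup.of 1 ^ 2)⁻¹,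
    FreeGroup.of 0 * FreeGroup.of 1 * FreeGroup.of 0 *
      (FreeGroup.of 1 * FreeGroup.of 0 * FreeGroup.of 1)⁻¹ }

/-! ### Auxiliary material -/

noncomputable def rt : ℝ := (Real.sqrt 2)⁻¹

lemma hs : rt^2 = 1/2 := by
  rw [rt, ← one_div, div_pow, one_pow, Real.sq_sqrt (by norm_num : (0:ℝ) ≤ 2)]

lemma hrt2 : ((Real.sqrt 2 : ℝ) : ℍ[ℝ])⁻¹ = (⟨rt, 0, 0, 0⟩ : ℍ[ℝ]) := by
  refine (eq_inv_of_mul_eq_one_right ?_).symm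
  have h0 : Real.sqrt 2 * rt = 1 := mul_inv_cancel₀ (by positivity)
  apply Quaternion.ext
  · erw [Quaternion.re_mul]; simp [h0]
  · erw [Quaternion.imI_mul]; simp
  · erw [Quaternion.imJ_mul]; simp
  · erw [Quaternion.imK_mul]; simp

lemma hTq : Tq = (⟨rt, rt, 0, 0⟩ : ℍ[ℝ]) := by
  rw [Tq, hrt2]
  apply Quaternion.ext
  · erw [Quaternion.re_mul, Quaternion.re_add]; simp [qi]
  · erw [Quaternion.imI_mul, Quaternion.imI_add]; simp [qi]
  · erw [Quaternion.imJ_mul, Quaternion.imJ_add]; simp [qi]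
  · erw [Quaternion.imK_mul, Quaternion.imK_add]; simp [qi]

lemma hUq : Uq = (⟨rt, 0, rt, 0⟩ : ℍ[ℝ]) := by
  rw [Uq, hrt2]
  apply Quaternion.ext
  · erw [Quaternion.re_mul, Quaternion.re_add]; simp [qj]
  · erw [Quaternion.imI_mul, Quaternion.imI_add]; simp [qj]
  · erw [Quaternion.imJ_mul, Quaternion.imJ_add]; simp [qj]
  · erw [Quaternion.imK_mul, Quaternion.imK_add]; simp [qj]

/-! ### Abstract consequences of the two relations -/

section AbstractSeeds
variable {G : Type*} [Group G] (t u : G)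
variable (r1 : t * (u * u) * t = u * u) (r2 : t * u * t = u * t * u)

include r2 in
lemma seedE1 : (t * u * t) * t = u * (t * u * t) := by
  conv_lhs => rw [r2]
  group

include r2 in
lemma seedE2 : (t * u * t) * u = t * (t * u * t) := by
  conv_rhs => rw [r2]
  group

include r1 r2 in
lemma seedS3 : u * (t * t) * u = t * t := by
  have e1 := seedE1 t u r2
  have e2 := seedE2 t u r2
  have key : (t * u * t) * (u * (t * t) * u) = (t * u * t) * (t * t) := by
    calc (t * u * t) * (u * (t * t) * u) = ((t * u * t) * u) * (t * t) * u := by group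
      _ = (t * (t * u * t)) * (t * t) * u := by rw [e2]
      _ = t * (((t * u * t) * t) * (t * u)) := by group
      _ = t * ((u * (t * u * t)) * (t * u)) := by rw [e1]
      _ = (t * u) * (((t * u * t) * t) * u) := by group
      _ = (t * u) * ((u * (t * u * t)) * u) := by rw [e1]
      _ = (t * (u * u)) * ((t * u * t) * u) := by group
      _ = (t * (u * u)) * (t * (t * u * t)) := by rw [e2]
      _ = (t * (u * u) * t) * (t * u * t) := by group
      _ = (u * u) * (t * u * t) := by rw [r1]
      _ = u * (u * (t * u * t)) := by group
      _ = u * ((t * u * t) * t) := by rw [e1]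
      _ = (u * (t * u * t)) * t := by group
      _ = ((t * u * t) * t) * t := by rw [e1]
      _ = (t * u * t) * (t * t) := by group
  exact mul_left_cancel key

include r1 r2 in
lemma seedS4 : u * u * u * u = t * t * t * t := by
  have s3 := seedS3 t u r1 r2
  have h1 : (t*u*t) * (t*u*t) = t*t*t*t := by
    calc (t*u*t) * (t*u*t) = t * (u * (t * t) * u) * t := by group
      _ = t * (t * t) * t := by rw [s3]
      _ = t*t*t*t := by group
  have h2 : (t*u*t) * (t*u*t) = u*u*u*u := by
    calc (t*u*t) * (t*u*t) = (u*t*u) * (u*t*u) := by rw [r2]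
      _ = u * (t * (u * u) * t) * u := by group
      _ = u * (u * u) * u := by rw [r1]
      _ = u*u*u*u := by group
  rw [← h2, h1]

include r1 r2 in
lemma seedS6 : u * (t * t * t * t) = (t * t * t * t) * u := by
  have s3 := seedS3 t u r1 r2
  have A : u * (t * t) = (t * t) * u⁻¹ := by
    rw [eq_mul_inv_iff_mul_eq]; exact s3
  have B : u⁻¹ * (t * t) = (t * t) * u := by
    rw [inv_mul_eq_iff_eq_mul, ← mul_assoc]; exact s3.symm
  calc u * (t * t * t * t) = (u * (t * t)) * (t * t) := by group
    _ = ((t * t) * u⁻¹) * (t * t) := by rw [A]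
    _ = (t * t) * (u⁻¹ * (t * t)) := by group
    _ = (t * t) * ((t * t) * u) := by rw [B]
    _ = (t * t * t * t) * u := by group

include r1 r2 in
lemma seedS5 : t * t * t * t * t * t * t * t = 1 := by
  have s6 := seedS6 t u r1 r2
  have c1 : (u * u) * t = t⁻¹ * (u * u) := by
    rw [eq_comm, inv_mul_eq_iff_eq_mul, ← mul_assoc]; exact r1.symm
  have h1 : (u * u) * (t * t * t * t) = t⁻¹ * (t⁻¹ * (t⁻¹ * (t⁻¹ * (u * u)))) := by
    calc (u * u) * (t * t * t * t) = ((u * u) * t) * (t * t * t) := by group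
      _ = (t⁻¹ * (u * u)) * (t * t * t) := by rw [c1]
      _ = t⁻¹ * (((u * u) * t) * (t * t)) := by group
      _ = t⁻¹ * ((t⁻¹ * (u * u)) * (t * t)) := by rw [c1]
      _ = t⁻¹ * (t⁻¹ * (((u * u) * t) * t)) := by group
      _ = t⁻¹ * (t⁻¹ * ((t⁻¹ * (u * u)) * t)) := by rw [c1]
      _ = t⁻¹ * (t⁻¹ * (t⁻¹ * ((u * u) * t))) := by group
      _ = t⁻¹ * (t⁻¹ * (t⁻¹ * (t⁻¹ * (u * u)))) := by rw [c1]
  have h2 : (u * u) * (t * t * t * t) = (t * t * t * t) * (u * u) := by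
    calc (u * u) * (t * t * t * t) = u * (u * (t * t * t * t)) := by group
      _ = u * ((t * t * t * t) * u) := by rw [s6]
      _ = (u * (t * t * t * t)) * u := by group
      _ = ((t * t * t * t) * u) * u := by rw [s6]
      _ = (t * t * t * t) * (u * u) := by group
  have h3 : (t * t * t * t) * (u * u) = (t⁻¹ * t⁻¹ * t⁻¹ * t⁻¹) * (u * u) := by
    rw [← h2, h1]; group
  have h4 := mul_right_cancel h3
  calc t*t*t*t*t*t*t*t = (t*t*t*t) * (t*t*t*t) := by group
    _ = (t⁻¹ * t⁻¹ * t⁻¹ * t⁻¹) * (t*t*t*t) := by rw [h4]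
    _ = 1 := by group

end AbstractSeeds

/-! ### The presented group -/

abbrev P := PresentedGroup octRels
def tP : P := PresentedGroup.of 0
def uP : P := PresentedGroup.of 1

lemma relP (r : FreeGroup (Fin 2)) (hr : r ∈ octRels) : PresentedGroup.mk octRels r = 1 :=
  (QuotientGroup.eq_one_iff _).mpr (Subgroup.subset_normalClosure hr)

lemma r1P : tP * (uP * uP) * tP = uP * uP := by
  have h := relP _ (Set.mem_insert _ _)
  rw [map_mul, map_mul, map_mul, map_inv, map_pow] at h
  rw [mul_inv_eq_one] at h
  simpa [tP, uP, PresentedGroup.of, pow_two, mul_assoc] using h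

lemma r2P : tP * uP * tP = uP * tP * uP := by
  have h := relP _ (Set.mem_insert_of_mem _ rfl)
  rw [map_mul, map_mul, map_mul, map_inv, map_mul, map_mul] at h
  rw [mul_inv_eq_one] at h
  simpa [tP, uP, PresentedGroup.of, mul_assoc] using h

def ev (L : List Bool) : P := (L.map (fun b => if b then uP else tP)).prod

lemma ev_append (L1 L2 : List Bool) : ev (L1 ++ L2) = ev L1 * ev L2 := by
  simp [ev]

lemma ec {a b : List Bool} (h : ev a = ev b) (xs ys : List Bool) :
    ev (xs ++ a ++ ys) = ev (xs ++ b ++ ys) := by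
  simp [ev_append, h]

lemma ev_t (L : List Bool) : ev (false :: L) = tP * ev L := by simp [ev]
lemma ev_u (L : List Bool) : ev (true :: L) = uP * ev L := by simp [ev]

lemma sd1 : ev [false,true,true,false] = ev [true,true] := by
  simp only [ev, List.map_cons, List.map_nil, List.prod_cons, List.prod_nil, if_true, if_false,
    mul_one, Bool.false_eq_true]
  simpa [mul_assoc] using r1P

lemma sd2 : ev [true,false,true] = ev [false,true,false] := by
  simp only [ev, List.map_cons, List.map_nil, List.prod_cons, List.prod_nil, if_true, if_false,
    mul_one, Bool.false_eq_true]
  simpa [mul_assoc] using r2P.symm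

lemma sd3 : ev [true,false,false,true] = ev [false,false] := by
  simp only [ev, List.map_cons, List.map_nil, List.prod_cons, List.prod_nil, if_true, if_false,
    mul_one, Bool.false_eq_true]
  simpa [mul_assoc] using seedS3 tP uP r1P r2P

lemma sd4 : ev [false,false,false,false,false,false,false,false] = ev [] := by
  simp only [ev, List.map_cons, List.map_nil, List.prod_cons, List.prod_nil, if_true, if_false,
    mul_one, Bool.false_eq_true]
  simpa [mul_assoc] using seedS5 tP uP r1P r2P

lemma sd5 : ev [true,true,true,true] = ev [false,false,false,false] := by
  simp only [ev, List.map_cons, List.map_nil, List.prod_cons, List.prod_nil, if_true, if_false,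
    mul_one, Bool.false_eq_true]
  simpa [mul_assoc] using seedS4 tP uP r1P r2P

lemma sd6 : ev [true,false,false,false,false] = ev [false,false,false,false,true] := by
  simp only [ev, List.map_cons, List.map_nil, List.prod_cons, List.prod_nil, if_true, if_false,
    mul_one, Bool.false_eq_true]
  simpa [mul_assoc] using seedS6 tP uP r1P r2P

lemma st_t_0 : tP * ev [] = ev [false] := by
  calc tP * ev [] = ev [false] := (ev_t _).symm

lemma st_t_1 : tP * ev [false] = ev [false, false] := by
  calc tP * ev [false] = ev [false, false] := (ev_t _).symm

lemma st_t_2 : tP * ev [true] = ev [false, true] := by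
  calc tP * ev [true] = ev [false, true] := (ev_t _).symm

lemma st_t_3 : tP * ev [false, false] = ev [false, false, false] := by
  calc tP * ev [false, false] = ev [false, false, false] := (ev_t _).symm

lemma st_t_4 : tP * ev [false, true] = ev [false, false, true] := by
  calc tP * ev [false, true] = ev [false, false, true] := (ev_t _).symm

lemma st_t_5 : tP * ev [true, false] = ev [false, true, false] := by
  calc tP * ev [true, false] = ev [false, true, false] := (ev_t _).symm

lemma st_t_6 : tP * ev [true, true] = ev [false, true, true] := by
  calc tP * ev [true, true] = ev [false, true, true] := (ev_t _).symm

lemma st_t_7 : tP * ev [false, false, false] = ev [false, false, false, false] := by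
  calc tP * ev [false, false, false] = ev [false, false, false, false] := (ev_t _).symm

lemma st_t_8 : tP * ev [false, false, true] = ev [false, false, false, true] := by
  calc tP * ev [false, false, true] = ev [false, false, false, true] := (ev_t _).symm

lemma st_t_9 : tP * ev [false, true, false] = ev [false, false, true, false] := by
  calc tP * ev [false, true, false] = ev [false, false, true, false] := (ev_t _).symm

lemma st_t_10 : tP * ev [false, true, true] = ev [false, false, true, true] := by
  calc tP * ev [false, true, true] = ev [false, false, true, true] := (ev_t _).symm

lemma st_t_11 : tP * ev [true, false, false] = ev [false, true, false, false] := by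
  calc tP * ev [true, false, false] = ev [false, true, false, false] := (ev_t _).symm

lemma st_t_12 : tP * ev [true, true, false] = ev [true, true] := by
  calc tP * ev [true, true, false] = ev [false, true, true, false] := (ev_t _).symm
    _ = ev [true, true] := by simpa only [List.cons_append, List.nil_append, List.append_nil] using ec sd1 [] []

lemma st_t_13 : tP * ev [true, true, true] = ev [false, true, true, true] := by
  calc tP * ev [true, true, true] = ev [false, true, true, true] := (ev_t _).symm

lemma st_t_14 : tP * ev [false, false, false, false] = ev [false, false, false, false, false] := by
  calc tP * ev [false, false, false, false] = ev [false, false, false, false, false] := (ev_t _).symm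

lemma st_t_15 : tP * ev [false, false, false, true] = ev [false, false, false, false, true] := by
  calc tP * ev [false, false, false, true] = ev [false, false, false, false, true] := (ev_t _).symm

lemma st_t_16 : tP * ev [false, false, true, false] = ev [false, false, false, true, false] := by
  calc tP * ev [false, false, true, false] = ev [false, false, false, true, false] := (ev_t _).symm

lemma st_t_17 : tP * ev [false, false, true, true] = ev [false, false, false, true, true] := by
  calc tP * ev [false, false, true, true] = ev [false, false, false, true, true] := (ev_t _).symm

lemma st_t_18 : tP * ev [false, true, false, false] = ev [true, true, true] := by
  calc tP * ev [false, true, false, false] = ev [false, false, true, false, false] := (ev_t _).symm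
    _ = ev [false, true, false, true, false] := by simpa only [List.cons_append, List.nil_append, List.append_nil] using ec sd2.symm [false] [false]
    _ = ev [true, false, true, true, false] := by simpa only [List.cons_append, List.nil_append, List.append_nil] using ec sd2.symm [] [true, false]
    _ = ev [true, true, true] := by simpa only [List.cons_append, List.nil_append, List.append_nil] using ec sd1 [true] []

lemma st_t_19 : tP * ev [false, true, true, true] = ev [false, false, true, true, true] := by
  calc tP * ev [false, true, true, true] = ev [false, false, true, true, true] := (ev_t _).symm

lemma st_t_20 : tP * ev [true, false, false, false] = ev [false, true, false, false, false] := by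
  calc tP * ev [true, false, false, false] = ev [false, true, false, false, false] := (ev_t _).symm

lemma st_t_21 : tP * ev [true, true, false, false] = ev [true, true, false] := by
  calc tP * ev [true, true, false, false] = ev [false, true, true, false, false] := (ev_t _).symm
    _ = ev [true, true, false] := by simpa only [List.cons_append, List.nil_append, List.append_nil] using ec sd1 [] [false]

lemma st_t_22 : tP * ev [true, true, true, false] = ev [false, true, true, true, false] := by
  calc tP * ev [true, true, true, false] = ev [false, true, true, true, false] := (ev_t _).symm

lemma st_t_23 : tP * ev [false, false, false, false, false] = ev [false, false, false, false, false, false] := by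
  calc tP * ev [false, false, false, false, false] = ev [false, false, false, false, false, false] := (ev_t _).symm

lemma st_t_24 : tP * ev [false, false, false, false, true] = ev [false, false, false, false, false, true] := by
  calc tP * ev [false, false, false, false, true] = ev [false, false, false, false, false, true] := (ev_t _).symm

lemma st_t_25 : tP * ev [false, false, false, true, false] = ev [false, false, false, false, true, false] := by
  calc tP * ev [false, false, false, true, false] = ev [false, false, false, false, true, false] := (ev_t _).symm

lemma st_t_26 : tP * ev [false, false, false, true, true] = ev [false, false, false, false, true, true] := by
  calc tP * ev [false, false, false, true, true] = ev [false, false, false, false, true, true] := (ev_t _).symm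

lemma st_t_27 : tP * ev [false, false, true, true, true] = ev [false, false, false, true, true, true] := by
  calc tP * ev [false, false, true, true, true] = ev [false, false, false, true, true, true] := (ev_t _).symm

lemma st_t_28 : tP * ev [false, true, false, false, false] = ev [true, true, true, false] := by
  calc tP * ev [false, true, false, false, false] = ev [false, false, true, false, false, false] := (ev_t _).symm
    _ = ev [false, true, false, true, false, false] := by simpa only [List.cons_append, List.nil_append, List.append_nil] using ec sd2.symm [false] [false, false]
    _ = ev [true, false, true, true, false, false] := by simpa only [List.cons_append, List.nil_append, List.append_nil] using ec sd2.symm [] [true, false, false]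
    _ = ev [true, true, true, false] := by simpa only [List.cons_append, List.nil_append, List.append_nil] using ec sd1 [true] [false]

lemma st_t_29 : tP * ev [false, true, true, true, false] = ev [false, false, true, true, true, false] := by
  calc tP * ev [false, true, true, true, false] = ev [false, false, true, true, true, false] := (ev_t _).symm

lemma st_t_30 : tP * ev [true, false, false, false, true] = ev [true, false, false, false] := by
  calc tP * ev [true, false, false, false, true] = ev [false, true, false, false, false, true] := (ev_t _).symm
    _ = ev [true, false, true, false, false, true] := by simpa only [List.cons_append, List.nil_append, List.append_nil] using ec sd2.symm [] [false, false, true]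
    _ = ev [true, false, false, false] := by simpa only [List.cons_append, List.nil_append, List.append_nil] using ec sd3 [true, false] []

lemma st_t_31 : tP * ev [true, true, false, false, false] = ev [true, true, false, false] := by
  calc tP * ev [true, true, false, false, false] = ev [false, true, true, false, false, false] := (ev_t _).symm
    _ = ev [true, true, false, false] := by simpa only [List.cons_append, List.nil_append, List.append_nil] using ec sd1 [] [false, false]

lemma st_t_32 : tP * ev [true, true, true, false, false] = ev [false, true, true, true, false, false] := by
  calc tP * ev [true, true, true, false, false] = ev [false, true, true, true, false, false] := (ev_t _).symm

lemma st_t_33 : tP * ev [false, false, false, false, false, false] = ev [false, false, false, false, false, false, false] := by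
  calc tP * ev [false, false, false, false, false, false] = ev [false, false, false, false, false, false, false] := (ev_t _).symm

lemma st_t_34 : tP * ev [false, false, false, false, false, true] = ev [true, true, true, false, false] := by
  calc tP * ev [false, false, false, false, false, true] = ev [false, false, false, false, false, false, true] := (ev_t _).symm
    _ = ev [true, true, true, true, false, false, true] := by simpa only [List.cons_append, List.nil_append, List.append_nil] using ec sd5.symm [] [false, false, true]
    _ = ev [true, true, true, false, false] := by simpa only [List.cons_append, List.nil_append, List.append_nil] using ec sd3 [true, true, true] []

lemma st_t_35 : tP * ev [false, false, false, false, true, false] = ev [false, false, false, false, false, true, false] := by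
  calc tP * ev [false, false, false, false, true, false] = ev [false, false, false, false, false, true, false] := (ev_t _).symm

lemma st_t_36 : tP * ev [false, false, false, false, true, true] = ev [true, true, false, false, false] := by
  calc tP * ev [false, false, false, false, true, true] = ev [false, false, false, false, false, true, true] := (ev_t _).symm
    _ = ev [false, true, true, true, true, true, true] := by simpa only [List.cons_append, List.nil_append, List.append_nil] using ec sd5.symm [false] [true, true]
    _ = ev [false, true, true, false, false, false, false] := by simpa only [List.cons_append, List.nil_append, List.append_nil] using ec sd5 [false, true, true] []
    _ = ev [true, true, false, false, false] := by simpa only [List.cons_append, List.nil_append, List.append_nil] using ec sd1 [] [false, false, false]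

lemma st_t_37 : tP * ev [false, false, false, true, true, true] = ev [false, false, false, false, true, true, true] := by
  calc tP * ev [false, false, false, true, true, true] = ev [false, false, false, false, true, true, true] := (ev_t _).symm

lemma st_t_38 : tP * ev [false, false, true, true, true, false] = ev [false, false, false, true, true, true, false] := by
  calc tP * ev [false, false, true, true, true, false] = ev [false, false, false, true, true, true, false] := (ev_t _).symm

lemma st_t_39 : tP * ev [false, true, true, true, false, false] = ev [true] := by
  calc tP * ev [false, true, true, true, false, false] = ev [false, false, true, true, true, false, false] := (ev_t _).symm
    _ = ev [true, false, false, true, true, true, true, false, false] := by simpa only [List.cons_append, List.nil_append, List.append_nil] using ec sd3.symm [] [true, true, true, false, false]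
    _ = ev [true, false, false, false, false, false, false, false, false] := by simpa only [List.cons_append, List.nil_append, List.append_nil] using ec sd5 [true, false, false] [false, false]
    _ = ev [true] := by simpa only [List.cons_append, List.nil_append, List.append_nil] using ec sd4 [true] []

lemma st_t_40 : tP * ev [true, false, false, false, true, true] = ev [true, false, false, false, true] := by
  calc tP * ev [true, false, false, false, true, true] = ev [false, true, false, false, false, true, true] := (ev_t _).symm
    _ = ev [true, false, true, false, false, true, true] := by simpa only [List.cons_append, List.nil_append, List.append_nil] using ec sd2.symm [] [false, false, true, true]
    _ = ev [true, false, false, false, true] := by simpa only [List.cons_append, List.nil_append, List.append_nil] using ec sd3 [true, false] [true]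

lemma st_t_41 : tP * ev [true, true, false, false, false, true] = ev [true, false, false] := by
  calc tP * ev [true, true, false, false, false, true] = ev [false, true, true, false, false, false, true] := (ev_t _).symm
    _ = ev [true, true, false, false, true] := by simpa only [List.cons_append, List.nil_append, List.append_nil] using ec sd1 [] [false, false, true]
    _ = ev [true, false, false] := by simpa only [List.cons_append, List.nil_append, List.append_nil] using ec sd3 [true] []

lemma st_t_42 : tP * ev [true, true, true, false, false, false] = ev [false, true, true, true, false, false, false] := by
  calc tP * ev [true, true, true, false, false, false] = ev [false, true, true, true, false, false, false] := (ev_t _).symm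

lemma st_t_43 : tP * ev [false, false, false, false, false, false, false] = ev [] := by
  calc tP * ev [false, false, false, false, false, false, false] = ev [false, false, false, false, false, false, false, false] := (ev_t _).symm
    _ = ev [] := by simpa only [List.cons_append, List.nil_append, List.append_nil] using ec sd4 [] []

lemma st_t_44 : tP * ev [false, false, false, false, false, true, false] = ev [true, true, true, false, false, false] := by
  calc tP * ev [false, false, false, false, false, true, false] = ev [false, false, false, false, false, false, true, false] := (ev_t _).symm
    _ = ev [true, true, true, true, false, false, true, false] := by simpa only [List.cons_append, List.nil_append, List.append_nil] using ec sd5.symm [] [false, false, true, false]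
    _ = ev [true, true, true, false, false, false] := by simpa only [List.cons_append, List.nil_append, List.append_nil] using ec sd3 [true, true, true] [false]

lemma st_t_45 : tP * ev [false, false, false, false, true, true, true] = ev [true, true, false, false, false, true] := by
  calc tP * ev [false, false, false, false, true, true, true] = ev [false, false, false, false, false, true, true, true] := (ev_t _).symm
    _ = ev [false, true, true, true, true, true, true, true] := by simpa only [List.cons_append, List.nil_append, List.append_nil] using ec sd5.symm [false] [true, true, true]
    _ = ev [false, true, true, false, false, false, false, true] := by simpa only [List.cons_append, List.nil_append, List.append_nil] using ec sd5 [false, true, true] [true]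
    _ = ev [true, true, false, false, false, true] := by simpa only [List.cons_append, List.nil_append, List.append_nil] using ec sd1 [] [false, false, false, true]

lemma st_t_46 : tP * ev [false, false, false, true, true, true, false] = ev [true, false, false, false, true, true] := by
  calc tP * ev [false, false, false, true, true, true, false] = ev [false, false, false, false, true, true, true, false] := (ev_t _).symm
    _ = ev [true, false, false, false, false, true, true, false] := by simpa only [List.cons_append, List.nil_append, List.append_nil] using ec sd6.symm [] [true, true, false]
    _ = ev [true, false, false, false, true, true] := by simpa only [List.cons_append, List.nil_append, List.append_nil] using ec sd1 [true, false, false, false] []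

lemma st_t_47 : tP * ev [false, true, true, true, false, false, false] = ev [true, false] := by
  calc tP * ev [false, true, true, true, false, false, false] = ev [false, false, true, true, true, false, false, false] := (ev_t _).symm
    _ = ev [true, false, false, true, true, true, true, false, false, false] := by simpa only [List.cons_append, List.nil_append, List.append_nil] using ec sd3.symm [] [true, true, true, false, false, false]
    _ = ev [true, false, false, false, false, false, false, false, false, false] := by simpa only [List.cons_append, List.nil_append, List.append_nil] using ec sd5 [true, false, false] [false, false, false]
    _ = ev [true, false] := by simpa only [List.cons_append, List.nil_append, List.append_nil] using ec sd4 [true] [false]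

lemma st_u_0 : uP * ev [] = ev [true] := by
  calc uP * ev [] = ev [true] := (ev_u _).symm

lemma st_u_1 : uP * ev [false] = ev [true, false] := by
  calc uP * ev [false] = ev [true, false] := (ev_u _).symm

lemma st_u_2 : uP * ev [true] = ev [true, true] := by
  calc uP * ev [true] = ev [true, true] := (ev_u _).symm

lemma st_u_3 : uP * ev [false, false] = ev [true, false, false] := by
  calc uP * ev [false, false] = ev [true, false, false] := (ev_u _).symm

lemma st_u_4 : uP * ev [false, true] = ev [false, true, false] := by
  calc uP * ev [false, true] = ev [true, false, true] := (ev_u _).symm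
    _ = ev [false, true, false] := by simpa only [List.cons_append, List.nil_append, List.append_nil] using ec sd2 [] []

lemma st_u_5 : uP * ev [true, false] = ev [true, true, false] := by
  calc uP * ev [true, false] = ev [true, true, false] := (ev_u _).symm

lemma st_u_6 : uP * ev [true, true] = ev [true, true, true] := by
  calc uP * ev [true, true] = ev [true, true, true] := (ev_u _).symm

lemma st_u_7 : uP * ev [false, false, false] = ev [true, false, false, false] := by
  calc uP * ev [false, false, false] = ev [true, false, false, false] := (ev_u _).symm

lemma st_u_8 : uP * ev [false, false, true] = ev [false, false] := by
  calc uP * ev [false, false, true] = ev [true, false, false, true] := (ev_u _).symm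
    _ = ev [false, false] := by simpa only [List.cons_append, List.nil_append, List.append_nil] using ec sd3 [] []

lemma st_u_9 : uP * ev [false, true, false] = ev [false, true, false, false] := by
  calc uP * ev [false, true, false] = ev [true, false, true, false] := (ev_u _).symm
    _ = ev [false, true, false, false] := by simpa only [List.cons_append, List.nil_append, List.append_nil] using ec sd2 [] [false]

lemma st_u_10 : uP * ev [false, true, true] = ev [false, false, true, false] := by
  calc uP * ev [false, true, true] = ev [true, false, true, true] := (ev_u _).symm
    _ = ev [true, false, false, true, true, false] := by simpa only [List.cons_append, List.nil_append, List.append_nil] using ec sd1.symm [true, false] []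
    _ = ev [false, false, true, false] := by simpa only [List.cons_append, List.nil_append, List.append_nil] using ec sd3 [] [true, false]

lemma st_u_11 : uP * ev [true, false, false] = ev [true, true, false, false] := by
  calc uP * ev [true, false, false] = ev [true, true, false, false] := (ev_u _).symm

lemma st_u_12 : uP * ev [true, true, false] = ev [true, true, true, false] := by
  calc uP * ev [true, true, false] = ev [true, true, true, false] := (ev_u _).symm

lemma st_u_13 : uP * ev [true, true, true] = ev [false, false, false, false] := by
  calc uP * ev [true, true, true] = ev [true, true, true, true] := (ev_u _).symm
    _ = ev [false, false, false, false] := by simpa only [List.cons_append, List.nil_append, List.append_nil] using ec sd5 [] []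

lemma st_u_14 : uP * ev [false, false, false, false] = ev [false, false, false, false, true] := by
  calc uP * ev [false, false, false, false] = ev [true, false, false, false, false] := (ev_u _).symm
    _ = ev [false, false, false, false, true] := by simpa only [List.cons_append, List.nil_append, List.append_nil] using ec sd6 [] []

lemma st_u_15 : uP * ev [false, false, false, true] = ev [true, false, false, false, true] := by
  calc uP * ev [false, false, false, true] = ev [true, false, false, false, true] := (ev_u _).symm

lemma st_u_16 : uP * ev [false, false, true, false] = ev [false, false, false] := by
  calc uP * ev [false, false, true, false] = ev [true, false, false, true, false] := (ev_u _).symm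
    _ = ev [false, false, false] := by simpa only [List.cons_append, List.nil_append, List.append_nil] using ec sd3 [] [false]

lemma st_u_17 : uP * ev [false, false, true, true] = ev [false, false, true] := by
  calc uP * ev [false, false, true, true] = ev [true, false, false, true, true] := (ev_u _).symm
    _ = ev [false, false, true] := by simpa only [List.cons_append, List.nil_append, List.append_nil] using ec sd3 [] [true]

lemma st_u_18 : uP * ev [false, true, false, false] = ev [false, true, false, false, false] := by
  calc uP * ev [false, true, false, false] = ev [true, false, true, false, false] := (ev_u _).symm
    _ = ev [false, true, false, false, false] := by simpa only [List.cons_append, List.nil_append, List.append_nil] using ec sd2 [] [false, false]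

lemma st_u_19 : uP * ev [false, true, true, true] = ev [false, false, false, true, false] := by
  calc uP * ev [false, true, true, true] = ev [true, false, true, true, true] := (ev_u _).symm
    _ = ev [true, false, false, true, true, false, true] := by simpa only [List.cons_append, List.nil_append, List.append_nil] using ec sd1.symm [true, false] [true]
    _ = ev [true, false, false, true, false, true, false] := by simpa only [List.cons_append, List.nil_append, List.append_nil] using ec sd2 [true, false, false, true] []
    _ = ev [false, false, false, true, false] := by simpa only [List.cons_append, List.nil_append, List.append_nil] using ec sd3 [] [false, true, false]

lemma st_u_20 : uP * ev [true, false, false, false] = ev [true, true, false, false, false] := by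
  calc uP * ev [true, false, false, false] = ev [true, true, false, false, false] := (ev_u _).symm

lemma st_u_21 : uP * ev [true, true, false, false] = ev [true, true, true, false, false] := by
  calc uP * ev [true, true, false, false] = ev [true, true, true, false, false] := (ev_u _).symm

lemma st_u_22 : uP * ev [true, true, true, false] = ev [false, false, false, false, false] := by
  calc uP * ev [true, true, true, false] = ev [true, true, true, true, false] := (ev_u _).symm
    _ = ev [false, false, false, false, false] := by simpa only [List.cons_append, List.nil_append, List.append_nil] using ec sd5 [] [false]

lemma st_u_23 : uP * ev [false, false, false, false, false] = ev [false, false, false, false, true, false] := by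
  calc uP * ev [false, false, false, false, false] = ev [true, false, false, false, false, false] := (ev_u _).symm
    _ = ev [false, false, false, false, true, false] := by simpa only [List.cons_append, List.nil_append, List.append_nil] using ec sd6 [] [false]

lemma st_u_24 : uP * ev [false, false, false, false, true] = ev [false, false, false, false, true, true] := by
  calc uP * ev [false, false, false, false, true] = ev [true, false, false, false, false, true] := (ev_u _).symm
    _ = ev [false, false, false, false, true, true] := by simpa only [List.cons_append, List.nil_append, List.append_nil] using ec sd6 [] [true]

lemma st_u_25 : uP * ev [false, false, false, true, false] = ev [false, false, false, true] := by
  calc uP * ev [false, false, false, true, false] = ev [true, false, false, false, true, false] := (ev_u _).symm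
    _ = ev [true, false, false, true, false, true] := by simpa only [List.cons_append, List.nil_append, List.append_nil] using ec sd2.symm [true, false, false] []
    _ = ev [false, false, false, true] := by simpa only [List.cons_append, List.nil_append, List.append_nil] using ec sd3 [] [false, true]

lemma st_u_26 : uP * ev [false, false, false, true, true] = ev [true, false, false, false, true, true] := by
  calc uP * ev [false, false, false, true, true] = ev [true, false, false, false, true, true] := (ev_u _).symm

lemma st_u_27 : uP * ev [false, false, true, true, true] = ev [false, false, true, true] := by
  calc uP * ev [false, false, true, true, true] = ev [true, false, false, true, true, true] := (ev_u _).symm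
    _ = ev [false, false, true, true] := by simpa only [List.cons_append, List.nil_append, List.append_nil] using ec sd3 [] [true, true]

lemma st_u_28 : uP * ev [false, true, false, false, false] = ev [false, false, false, false, false, true] := by
  calc uP * ev [false, true, false, false, false] = ev [true, false, true, false, false, false] := (ev_u _).symm
    _ = ev [false, true, false, false, false, false] := by simpa only [List.cons_append, List.nil_append, List.append_nil] using ec sd2 [] [false, false, false]
    _ = ev [false, false, false, false, false, true] := by simpa only [List.cons_append, List.nil_append, List.append_nil] using ec sd6 [false] []

lemma st_u_29 : uP * ev [false, true, true, true, false] = ev [false, true, true, true] := by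
  calc uP * ev [false, true, true, true, false] = ev [true, false, true, true, true, false] := (ev_u _).symm
    _ = ev [false, true, false, true, true, false] := by simpa only [List.cons_append, List.nil_append, List.append_nil] using ec sd2 [] [true, true, false]
    _ = ev [false, true, true, true] := by simpa only [List.cons_append, List.nil_append, List.append_nil] using ec sd1 [false, true] []

lemma st_u_30 : uP * ev [true, false, false, false, true] = ev [true, true, false, false, false, true] := by
  calc uP * ev [true, false, false, false, true] = ev [true, true, false, false, false, true] := (ev_u _).symm

lemma st_u_31 : uP * ev [true, true, false, false, false] = ev [true, true, true, false, false, false] := by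
  calc uP * ev [true, true, false, false, false] = ev [true, true, true, false, false, false] := (ev_u _).symm

lemma st_u_32 : uP * ev [true, true, true, false, false] = ev [false, false, false, false, false, false] := by
  calc uP * ev [true, true, true, false, false] = ev [true, true, true, true, false, false] := (ev_u _).symm
    _ = ev [false, false, false, false, false, false] := by simpa only [List.cons_append, List.nil_append, List.append_nil] using ec sd5 [] [false, false]

lemma st_u_33 : uP * ev [false, false, false, false, false, false] = ev [false, false, true, true, true] := by
  calc uP * ev [false, false, false, false, false, false] = ev [true, false, false, false, false, false, false] := (ev_u _).symm
    _ = ev [true, false, false, true, true, true, true] := by simpa only [List.cons_append, List.nil_append, List.append_nil] using ec sd5.symm [true, false, false] []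
    _ = ev [false, false, true, true, true] := by simpa only [List.cons_append, List.nil_append, List.append_nil] using ec sd3 [] [true, true, true]

lemma st_u_34 : uP * ev [false, false, false, false, false, true] = ev [false, false, false, false, false, true, false] := by
  calc uP * ev [false, false, false, false, false, true] = ev [true, false, false, false, false, false, true] := (ev_u _).symm
    _ = ev [false, false, false, false, true, false, true] := by simpa only [List.cons_append, List.nil_append, List.append_nil] using ec sd6 [] [false, true]
    _ = ev [false, false, false, false, false, true, false] := by simpa only [List.cons_append, List.nil_append, List.append_nil] using ec sd2 [false, false, false, false] []

lemma st_u_35 : uP * ev [false, false, false, false, true, false] = ev [false, false, false, true, true] := by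
  calc uP * ev [false, false, false, false, true, false] = ev [true, false, false, false, false, true, false] := (ev_u _).symm
    _ = ev [false, false, false, false, true, true, false] := by simpa only [List.cons_append, List.nil_append, List.append_nil] using ec sd6 [] [true, false]
    _ = ev [false, false, false, true, true] := by simpa only [List.cons_append, List.nil_append, List.append_nil] using ec sd1 [false, false, false] []

lemma st_u_36 : uP * ev [false, false, false, false, true, true] = ev [false, false, false, false, true, true, true] := by
  calc uP * ev [false, false, false, false, true, true] = ev [true, false, false, false, false, true, true] := (ev_u _).symm
    _ = ev [false, false, false, false, true, true, true] := by simpa only [List.cons_append, List.nil_append, List.append_nil] using ec sd6 [] [true, true]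

lemma st_u_37 : uP * ev [false, false, false, true, true, true] = ev [false, false, false, true, true, true, false] := by
  calc uP * ev [false, false, false, true, true, true] = ev [true, false, false, false, true, true, true] := (ev_u _).symm
    _ = ev [true, false, false, false, true, false, true, true, false] := by simpa only [List.cons_append, List.nil_append, List.append_nil] using ec sd1.symm [true, false, false, false, true] []
    _ = ev [true, false, false, true, false, true, true, true, false] := by simpa only [List.cons_append, List.nil_append, List.append_nil] using ec sd2.symm [true, false, false] [true, true, false]
    _ = ev [false, false, false, true, true, true, false] := by simpa only [List.cons_append, List.nil_append, List.append_nil] using ec sd3 [] [false, true, true, true, false]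

lemma st_u_38 : uP * ev [false, false, true, true, true, false] = ev [false, true, true] := by
  calc uP * ev [false, false, true, true, true, false] = ev [true, false, false, true, true, true, false] := (ev_u _).symm
    _ = ev [false, false, true, true, false] := by simpa only [List.cons_append, List.nil_append, List.append_nil] using ec sd3 [] [true, true, false]
    _ = ev [false, true, true] := by simpa only [List.cons_append, List.nil_append, List.append_nil] using ec sd1 [false] []

lemma st_u_39 : uP * ev [false, true, true, true, false, false] = ev [false, true, true, true, false] := by
  calc uP * ev [false, true, true, true, false, false] = ev [true, false, true, true, true, false, false] := (ev_u _).symm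
    _ = ev [false, true, false, true, true, false, false] := by simpa only [List.cons_append, List.nil_append, List.append_nil] using ec sd2 [] [true, true, false, false]
    _ = ev [false, true, true, true, false] := by simpa only [List.cons_append, List.nil_append, List.append_nil] using ec sd1 [false, true] [false]

lemma st_u_40 : uP * ev [true, false, false, false, true, true] = ev [false] := by
  calc uP * ev [true, false, false, false, true, true] = ev [true, true, false, false, false, true, true] := (ev_u _).symm
    _ = ev [false, true, true, false, false, false, false, true, true] := by simpa only [List.cons_append, List.nil_append, List.append_nil] using ec sd1.symm [] [false, false, false, true, true]
    _ = ev [false, true, true, true, true, true, true, true, true] := by simpa only [List.cons_append, List.nil_append, List.append_nil] using ec sd5.symm [false, true, true] [true, true]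
    _ = ev [false, false, false, false, false, true, true, true, true] := by simpa only [List.cons_append, List.nil_append, List.append_nil] using ec sd5 [false] [true, true, true, true]
    _ = ev [false, false, false, false, false, false, false, false, false] := by simpa only [List.cons_append, List.nil_append, List.append_nil] using ec sd5 [false, false, false, false, false] []
    _ = ev [false] := by simpa only [List.cons_append, List.nil_append, List.append_nil] using ec sd4 [] [false]

lemma st_u_41 : uP * ev [true, true, false, false, false, true] = ev [false, true, true, true, false, false, false] := by
  calc uP * ev [true, true, false, false, false, true] = ev [true, true, true, false, false, false, true] := (ev_u _).symm
    _ = ev [false, true, true, false, true, false, false, false, true] := by simpa only [List.cons_append, List.nil_append, List.append_nil] using ec sd1.symm [] [true, false, false, false, true]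
    _ = ev [false, true, true, true, false, true, false, false, true] := by simpa only [List.cons_append, List.nil_append, List.append_nil] using ec sd2.symm [false, true, true] [false, false, true]
    _ = ev [false, true, true, true, false, false, false] := by simpa only [List.cons_append, List.nil_append, List.append_nil] using ec sd3 [false, true, true, true, false] []

lemma st_u_42 : uP * ev [true, true, true, false, false, false] = ev [false, false, false, false, false, false, false] := by
  calc uP * ev [true, true, true, false, false, false] = ev [true, true, true, true, false, false, false] := (ev_u _).symm
    _ = ev [false, false, false, false, false, false, false] := by simpa only [List.cons_append, List.nil_append, List.append_nil] using ec sd5 [] [false, false, false]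

lemma st_u_43 : uP * ev [false, false, false, false, false, false, false] = ev [false, false, true, true, true, false] := by
  calc uP * ev [false, false, false, false, false, false, false] = ev [true, false, false, false, false, false, false, false] := (ev_u _).symm
    _ = ev [true, false, false, true, true, true, true, false] := by simpa only [List.cons_append, List.nil_append, List.append_nil] using ec sd5.symm [true, false, false] [false]
    _ = ev [false, false, true, true, true, false] := by simpa only [List.cons_append, List.nil_append, List.append_nil] using ec sd3 [] [true, true, true, false]

lemma st_u_44 : uP * ev [false, false, false, false, false, true, false] = ev [false, false, false, true, true, true] := by
  calc uP * ev [false, false, false, false, false, true, false] = ev [true, false, false, false, false, false, true, false] := (ev_u _).symm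
    _ = ev [true, false, false, false, false, true, false, true] := by simpa only [List.cons_append, List.nil_append, List.append_nil] using ec sd2.symm [true, false, false, false, false] []
    _ = ev [false, false, false, false, true, true, false, true] := by simpa only [List.cons_append, List.nil_append, List.append_nil] using ec sd6 [] [true, false, true]
    _ = ev [false, false, false, true, true, true] := by simpa only [List.cons_append, List.nil_append, List.append_nil] using ec sd1 [false, false, false] [true]

lemma st_u_45 : uP * ev [false, false, false, false, true, true, true] = ev [] := by
  calc uP * ev [false, false, false, false, true, true, true] = ev [true, false, false, false, false, true, true, true] := (ev_u _).symm
    _ = ev [false, false, false, false, true, true, true, true] := by simpa only [List.cons_append, List.nil_append, List.append_nil] using ec sd6 [] [true, true, true]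
    _ = ev [false, false, false, false, false, false, false, false] := by simpa only [List.cons_append, List.nil_append, List.append_nil] using ec sd5 [false, false, false, false] []
    _ = ev [] := by simpa only [List.cons_append, List.nil_append, List.append_nil] using ec sd4 [] []

lemma st_u_46 : uP * ev [false, false, false, true, true, true, false] = ev [false, true] := by
  calc uP * ev [false, false, false, true, true, true, false] = ev [true, false, false, false, true, true, true, false] := (ev_u _).symm
    _ = ev [true, false, true, false, false, true, true, true, true, false] := by simpa only [List.cons_append, List.nil_append, List.append_nil] using ec sd3.symm [true, false] [true, true, true, false]
    _ = ev [false, true, false, false, false, true, true, true, true, false] := by simpa only [List.cons_append, List.nil_append, List.append_nil] using ec sd2 [] [false, false, true, true, true, true, false]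
    _ = ev [false, true, false, false, false, false, false, false, false, false] := by simpa only [List.cons_append, List.nil_append, List.append_nil] using ec sd5 [false, true, false, false, false] [false]
    _ = ev [false, true] := by simpa only [List.cons_append, List.nil_append, List.append_nil] using ec sd4 [false, true] []

lemma st_u_47 : uP * ev [false, true, true, true, false, false, false] = ev [false, true, true, true, false, false] := by
  calc uP * ev [false, true, true, true, false, false, false] = ev [true, false, true, true, true, false, false, false] := (ev_u _).symm
    _ = ev [false, true, false, true, true, false, false, false] := by simpa only [List.cons_append, List.nil_append, List.append_nil] using ec sd2 [] [true, true, false, false, false]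
    _ = ev [false, true, true, true, false, false] := by simpa only [List.cons_append, List.nil_append, List.append_nil] using ec sd1 [false, true] [false, false]

def Wt : Fin 48 → List Bool := fun i => match i.val with
  | 0 => []
  | 1 => [false]
  | 2 => [true]
  | 3 => [false, false]
  | 4 => [false, true]
  | 5 => [true, false]
  | 6 => [true, true]
  | 7 => [false, false, false]
  | 8 => [false, false, true]
  | 9 => [false, true, false]
  | 10 => [false, true, true]
  | 11 => [true, false, false]
  | 12 => [true, true, false]
  | 13 => [true, true, true]
  | 14 => [false, false, false, false]
  | 15 => [false, false, false, true]
  | 16 => [false, false, true, false]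
  | 17 => [false, false, true, true]
  | 18 => [false, true, false, false]
  | 19 => [false, true, true, true]
  | 20 => [true, false, false, false]
  | 21 => [true, true, false, false]
  | 22 => [true, true, true, false]
  | 23 => [false, false, false, false, false]
  | 24 => [false, false, false, false, true]
  | 25 => [false, false, false, true, false]
  | 26 => [false, false, false, true, true]
  | 27 => [false, false, true, true, true]
  | 28 => [false, true, false, false, false]
  | 29 => [false, true, true, true, false]
  | 30 => [true, false, false, false, true]
  | 31 => [true, true, false, false, false]
  | 32 => [true, true, true, false, false]
  | 33 => [false, false, false, false, false, false]
  | 34 => [false, false, false, false, false, true]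
  | 35 => [false, false, false, false, true, false]
  | 36 => [false, false, false, false, true, true]
  | 37 => [false, false, false, true, true, true]
  | 38 => [false, false, true, true, true, false]
  | 39 => [false, true, true, true, false, false]
  | 40 => [true, false, false, false, true, true]
  | 41 => [true, true, false, false, false, true]
  | 42 => [true, true, true, false, false, false]
  | 43 => [false, false, false, false, false, false, false]
  | 44 => [false, false, false, false, false, true, false]
  | 45 => [false, false, false, false, true, true, true]
  | 46 => [false, false, false, true, true, true, false]
  | 47 => [false, true, true, true, false, false, false]
  | _ => []

def sgT : Fin 48 → Fin 48 := fun i => match i.val with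
  | 0 => 1
  | 1 => 3
  | 2 => 4
  | 3 => 7
  | 4 => 8
  | 5 => 9
  | 6 => 10
  | 7 => 14
  | 8 => 15
  | 9 => 16
  | 10 => 17
  | 11 => 18
  | 12 => 6
  | 13 => 19
  | 14 => 23
  | 15 => 24
  | 16 => 25
  | 17 => 26
  | 18 => 13
  | 19 => 27
  | 20 => 28
  | 21 => 12
  | 22 => 29
  | 23 => 33
  | 24 => 34
  | 25 => 35
  | 26 => 36
  | 27 => 37
  | 28 => 22
  | 29 => 38
  | 30 => 20
  | 31 => 21
  | 32 => 39
  | 33 => 43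
  | 34 => 32
  | 35 => 44
  | 36 => 31
  | 37 => 45
  | 38 => 46
  | 39 => 2
  | 40 => 30
  | 41 => 11
  | 42 => 47
  | 43 => 0
  | 44 => 42
  | 45 => 41
  | 46 => 40
  | 47 => 5
  | _ => 1

def sgU : Fin 48 → Fin 48 := fun i => match i.val with
  | 0 => 2
  | 1 => 5
  | 2 => 6
  | 3 => 11
  | 4 => 9
  | 5 => 12
  | 6 => 13
  | 7 => 20
  | 8 => 3
  | 9 => 18
  | 10 => 16
  | 11 => 21
  | 12 => 22
  | 13 => 14
  | 14 => 24
  | 15 => 30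
  | 16 => 7
  | 17 => 8
  | 18 => 28
  | 19 => 25
  | 20 => 31
  | 21 => 32
  | 22 => 23
  | 23 => 35
  | 24 => 36
  | 25 => 15
  | 26 => 40
  | 27 => 17
  | 28 => 34
  | 29 => 19
  | 30 => 41
  | 31 => 42
  | 32 => 33
  | 33 => 27
  | 34 => 44
  | 35 => 26
  | 36 => 45
  | 37 => 46
  | 38 => 10
  | 39 => 29
  | 40 => 1
  | 41 => 47
  | 42 => 43
  | 43 => 38
  | 44 => 37
  | 45 => 0
  | 46 => 4
  | 47 => 39
  | _ => 2

noncomputable def FF : Fin 48 → P := fun i => ev (Wt i)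

lemma htF : ∀ i, tP * FF i = FF (sgT i) := by
  intro i
  fin_cases i
  · exact st_t_0
  · exact st_t_1
  · exact st_t_2
  · exact st_t_3
  · exact st_t_4
  · exact st_t_5
  · exact st_t_6
  · exact st_t_7
  · exact st_t_8
  · exact st_t_9
  · exact st_t_10
  · exact st_t_11
  · exact st_t_12
  · exact st_t_13
  · exact st_t_14
  · exact st_t_15
  · exact st_t_16
  · exact st_t_17
  · exact st_t_18
  · exact st_t_19
  · exact st_t_20
  · exact st_t_21
  · exact st_t_22
  · exact st_t_23
  · exact st_t_24
  · exact st_t_25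
  · exact st_t_26
  · exact st_t_27
  · exact st_t_28
  · exact st_t_29
  · exact st_t_30
  · exact st_t_31
  · exact st_t_32
  · exact st_t_33
  · exact st_t_34
  · exact st_t_35
  · exact st_t_36
  · exact st_t_37
  · exact st_t_38
  · exact st_t_39
  · exact st_t_40
  · exact st_t_41
  · exact st_t_42
  · exact st_t_43
  · exact st_t_44
  · exact st_t_45
  · exact st_t_46
  · exact st_t_47

lemma huF : ∀ i, uP * FF i = FF (sgU i) := by
  intro i
  fin_cases i
  · exact st_u_0
  · exact st_u_1
  · exact st_u_2
  · exact st_u_3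
  · exact st_u_4
  · exact st_u_5
  · exact st_u_6
  · exact st_u_7
  · exact st_u_8
  · exact st_u_9
  · exact st_u_10
  · exact st_u_11
  · exact st_u_12
  · exact st_u_13
  · exact st_u_14
  · exact st_u_15
  · exact st_u_16
  · exact st_u_17
  · exact st_u_18
  · exact st_u_19
  · exact st_u_20
  · exact st_u_21
  · exact st_u_22
  · exact st_u_23
  · exact st_u_24
  · exact st_u_25
  · exact st_u_26
  · exact st_u_27
  · exact st_u_28
  · exact st_u_29
  · exact st_u_30
  · exact st_u_31
  · exact st_u_32
  · exact st_u_33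
  · exact st_u_34
  · exact st_u_35
  · exact st_u_36
  · exact st_u_37
  · exact st_u_38
  · exact st_u_39
  · exact st_u_40
  · exact st_u_41
  · exact st_u_42
  · exact st_u_43
  · exact st_u_44
  · exact st_u_45
  · exact st_u_46
  · exact st_u_47

def cA : Fin 48 → Fin 7 := fun i => match i.val with
  | 0 => 6
  | 1 => 5
  | 2 => 5
  | 3 => 3
  | 4 => 4
  | 5 => 4
  | 6 => 3
  | 7 => 1
  | 8 => 3
  | 9 => 3
  | 10 => 3
  | 11 => 3
  | 12 => 3
  | 13 => 1
  | 14 => 0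
  | 15 => 2
  | 16 => 2
  | 17 => 3
  | 18 => 2
  | 19 => 2
  | 20 => 2
  | 21 => 3
  | 22 => 2
  | 23 => 1
  | 24 => 1
  | 25 => 1
  | 26 => 3
  | 27 => 3
  | 28 => 1
  | 29 => 3
  | 30 => 3
  | 31 => 3
  | 32 => 3
  | 33 => 3
  | 34 => 2
  | 35 => 2
  | 36 => 3
  | 37 => 4
  | 38 => 4
  | 39 => 4
  | 40 => 4
  | 41 => 4
  | 42 => 4
  | 43 => 5
  | 44 => 3
  | 45 => 5
  | 46 => 5
  | 47 => 5
  | _ => 6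

def cB : Fin 48 → Fin 7 := fun i => match i.val with
  | 0 => 3
  | 1 => 5
  | 2 => 3
  | 3 => 6
  | 4 => 4
  | 5 => 4
  | 6 => 3
  | 7 => 5
  | 8 => 5
  | 9 => 5
  | 10 => 3
  | 11 => 5
  | 12 => 3
  | 13 => 3
  | 14 => 3
  | 15 => 4
  | 16 => 4
  | 17 => 3
  | 18 => 4
  | 19 => 2
  | 20 => 4
  | 21 => 3
  | 22 => 2
  | 23 => 1
  | 24 => 3
  | 25 => 3
  | 26 => 3
  | 27 => 1
  | 28 => 3
  | 29 => 1
  | 30 => 5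
  | 31 => 3
  | 32 => 1
  | 33 => 0
  | 34 => 2
  | 35 => 2
  | 36 => 3
  | 37 => 2
  | 38 => 2
  | 39 => 2
  | 40 => 4
  | 41 => 4
  | 42 => 2
  | 43 => 1
  | 44 => 1
  | 45 => 3
  | 46 => 3
  | 47 => 3
  | _ => 3

def cC : Fin 48 → Fin 7 := fun i => match i.val with
  | 0 => 3
  | 1 => 3
  | 2 => 5
  | 3 => 3
  | 4 => 4
  | 5 => 4
  | 6 => 6
  | 7 => 3
  | 8 => 3
  | 9 => 5
  | 10 => 5
  | 11 => 3
  | 12 => 5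
  | 13 => 5
  | 14 => 3
  | 15 => 2
  | 16 => 4
  | 17 => 3
  | 18 => 4
  | 19 => 4
  | 20 => 2
  | 21 => 3
  | 22 => 4
  | 23 => 3
  | 24 => 1
  | 25 => 3
  | 26 => 1
  | 27 => 3
  | 28 => 3
  | 29 => 5
  | 30 => 1
  | 31 => 1
  | 32 => 3
  | 33 => 3
  | 34 => 2
  | 35 => 2
  | 36 => 0
  | 37 => 2
  | 38 => 4
  | 39 => 4
  | 40 => 2
  | 41 => 2
  | 42 => 2
  | 43 => 3
  | 44 => 1
  | 45 => 1
  | 46 => 3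
  | 47 => 3
  | _ => 3

def cD : Fin 48 → Fin 7 := fun i => match i.val with
  | 0 => 3
  | 1 => 3
  | 2 => 3
  | 3 => 3
  | 4 => 4
  | 5 => 2
  | 6 => 3
  | 7 => 3
  | 8 => 5
  | 9 => 3
  | 10 => 5
  | 11 => 1
  | 12 => 1
  | 13 => 3
  | 14 => 3
  | 15 => 4
  | 16 => 4
  | 17 => 6
  | 18 => 2
  | 19 => 4
  | 20 => 2
  | 21 => 0
  | 22 => 2
  | 23 => 3
  | 24 => 3
  | 25 => 5
  | 26 => 5
  | 27 => 5
  | 28 => 1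
  | 29 => 3
  | 30 => 3
  | 31 => 1
  | 32 => 1
  | 33 => 3
  | 34 => 2
  | 35 => 4
  | 36 => 3
  | 37 => 4
  | 38 => 4
  | 39 => 2
  | 40 => 4
  | 41 => 2
  | 42 => 2
  | 43 => 3
  | 44 => 3
  | 45 => 3
  | 46 => 5
  | 47 => 1
  | _ => 3

noncomputable def vv : Fin 7 → ℝ := fun i => match i.val with
  | 0 => (-1)
  | 1 => (-rt)
  | 2 => (-(1/2))
  | 3 => 0
  | 4 => (1/2)
  | 5 => rt
  | 6 => 1
  | _ => 0

noncomputable def qv : Fin 48 → ℍ[ℝ] := fun i => ⟨vv (cA i), vv (cB i), vv (cC i), vv (cD i)⟩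

noncomputable def evq (L : List Bool) : ℍ[ℝ] := (L.map (fun b => if b then Uq else Tq)).prod

lemma evq_append (L1 L2 : List Bool) : evq (L1 ++ L2) = evq L1 * evq L2 := by
  simp [evq]

lemma evq_t : evq [false] = Tq := by simp [evq]
lemma evq_u : evq [true] = Uq := by simp [evq]

lemma ms1 : (⟨1, 0, 0, 0⟩ : ℍ[ℝ]) * (⟨rt, rt, 0, 0⟩ : ℍ[ℝ]) = (⟨rt, rt, 0, 0⟩ : ℍ[ℝ]) := by
  simp only [QuaternionAlgebra.mk_mul_mk]
  apply Quaternion.ext <;> dsimp only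
  · linear_combination (0:ℝ) * hs
  · linear_combination (0:ℝ) * hs
  · linear_combination (0:ℝ) * hs
  · linear_combination (0:ℝ) * hs

lemma ms2 : (⟨1, 0, 0, 0⟩ : ℍ[ℝ]) * (⟨rt, 0, rt, 0⟩ : ℍ[ℝ]) = (⟨rt, 0, rt, 0⟩ : ℍ[ℝ]) := by
  simp only [QuaternionAlgebra.mk_mul_mk]
  apply Quaternion.ext <;> dsimp only
  · linear_combination (0:ℝ) * hs
  · linear_combination (0:ℝ) * hs
  · linear_combination (0:ℝ) * hs
  · linear_combination (0:ℝ) * hs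

lemma ms3 : (⟨rt, rt, 0, 0⟩ : ℍ[ℝ]) * (⟨rt, rt, 0, 0⟩ : ℍ[ℝ]) = (⟨0, 1, 0, 0⟩ : ℍ[ℝ]) := by
  simp only [QuaternionAlgebra.mk_mul_mk]
  apply Quaternion.ext <;> dsimp only
  · linear_combination (0:ℝ) * hs
  · linear_combination (2 : ℝ) * hs
  · linear_combination (0:ℝ) * hs
  · linear_combination (0:ℝ) * hs

lemma ms4 : (⟨rt, rt, 0, 0⟩ : ℍ[ℝ]) * (⟨rt, 0, rt, 0⟩ : ℍ[ℝ]) = (⟨(1/2), (1/2), (1/2), (1/2)⟩ : ℍ[ℝ]) := by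
  simp only [QuaternionAlgebra.mk_mul_mk]
  apply Quaternion.ext <;> dsimp only
  · linear_combination (1 : ℝ) * hs
  · linear_combination (1 : ℝ) * hs
  · linear_combination (1 : ℝ) * hs
  · linear_combination (1 : ℝ) * hs

lemma ms5 : (⟨rt, 0, rt, 0⟩ : ℍ[ℝ]) * (⟨rt, rt, 0, 0⟩ : ℍ[ℝ]) = (⟨(1/2), (1/2), (1/2), (-(1/2))⟩ : ℍ[ℝ]) := by
  simp only [QuaternionAlgebra.mk_mul_mk]
  apply Quaternion.ext <;> dsimp only
  · linear_combination (1 : ℝ) * hs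
  · linear_combination (1 : ℝ) * hs
  · linear_combination (1 : ℝ) * hs
  · linear_combination ((0 - 1) : ℝ) * hs

lemma ms6 : (⟨rt, 0, rt, 0⟩ : ℍ[ℝ]) * (⟨rt, 0, rt, 0⟩ : ℍ[ℝ]) = (⟨0, 0, 1, 0⟩ : ℍ[ℝ]) := by
  simp only [QuaternionAlgebra.mk_mul_mk]
  apply Quaternion.ext <;> dsimp only
  · linear_combination (0:ℝ) * hs
  · linear_combination (0:ℝ) * hs
  · linear_combination (2 : ℝ) * hs
  · linear_combination (0:ℝ) * hs

lemma ms7 : (⟨0, 1, 0, 0⟩ : ℍ[ℝ]) * (⟨rt, rt, 0, 0⟩ : ℍ[ℝ]) = (⟨(-rt), rt, 0, 0⟩ : ℍ[ℝ]) := by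
  simp only [QuaternionAlgebra.mk_mul_mk]
  apply Quaternion.ext <;> dsimp only
  · linear_combination (0:ℝ) * hs
  · linear_combination (0:ℝ) * hs
  · linear_combination (0:ℝ) * hs
  · linear_combination (0:ℝ) * hs

lemma ms8 : (⟨0, 1, 0, 0⟩ : ℍ[ℝ]) * (⟨rt, 0, rt, 0⟩ : ℍ[ℝ]) = (⟨0, rt, 0, rt⟩ : ℍ[ℝ]) := by
  simp only [QuaternionAlgebra.mk_mul_mk]
  apply Quaternion.ext <;> dsimp only
  · linear_combination (0:ℝ) * hs
  · linear_combination (0:ℝ) * hs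
  · linear_combination (0:ℝ) * hs
  · linear_combination (0:ℝ) * hs

lemma ms9 : (⟨(1/2), (1/2), (1/2), (1/2)⟩ : ℍ[ℝ]) * (⟨rt, rt, 0, 0⟩ : ℍ[ℝ]) = (⟨0, rt, rt, 0⟩ : ℍ[ℝ]) := by
  simp only [QuaternionAlgebra.mk_mul_mk]
  apply Quaternion.ext <;> dsimp only
  · linear_combination (0:ℝ) * hs
  · linear_combination (0:ℝ) * hs
  · linear_combination (0:ℝ) * hs
  · linear_combination (0:ℝ) * hs

lemma ms10 : (⟨(1/2), (1/2), (1/2), (1/2)⟩ : ℍ[ℝ]) * (⟨rt, 0, rt, 0⟩ : ℍ[ℝ]) = (⟨0, 0, rt, rt⟩ : ℍ[ℝ]) := by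
  simp only [QuaternionAlgebra.mk_mul_mk]
  apply Quaternion.ext <;> dsimp only
  · linear_combination (0:ℝ) * hs
  · linear_combination (0:ℝ) * hs
  · linear_combination (0:ℝ) * hs
  · linear_combination (0:ℝ) * hs

lemma ms11 : (⟨(1/2), (1/2), (1/2), (-(1/2))⟩ : ℍ[ℝ]) * (⟨rt, rt, 0, 0⟩ : ℍ[ℝ]) = (⟨0, rt, 0, (-rt)⟩ : ℍ[ℝ]) := by
  simp only [QuaternionAlgebra.mk_mul_mk]
  apply Quaternion.ext <;> dsimp only
  · linear_combination (0:ℝ) * hs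
  · linear_combination (0:ℝ) * hs
  · linear_combination (0:ℝ) * hs
  · linear_combination (0:ℝ) * hs

lemma ms12 : (⟨0, 0, 1, 0⟩ : ℍ[ℝ]) * (⟨rt, rt, 0, 0⟩ : ℍ[ℝ]) = (⟨0, 0, rt, (-rt)⟩ : ℍ[ℝ]) := by
  simp only [QuaternionAlgebra.mk_mul_mk]
  apply Quaternion.ext <;> dsimp only
  · linear_combination (0:ℝ) * hs
  · linear_combination (0:ℝ) * hs
  · linear_combination (0:ℝ) * hs
  · linear_combination (0:ℝ) * hs

lemma ms13 : (⟨0, 0, 1, 0⟩ : ℍ[ℝ]) * (⟨rt, 0, rt, 0⟩ : ℍ[ℝ]) = (⟨(-rt), 0, rt, 0⟩ : ℍ[ℝ]) := by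
  simp only [QuaternionAlgebra.mk_mul_mk]
  apply Quaternion.ext <;> dsimp only
  · linear_combination (0:ℝ) * hs
  · linear_combination (0:ℝ) * hs
  · linear_combination (0:ℝ) * hs
  · linear_combination (0:ℝ) * hs

lemma ms14 : (⟨(-rt), rt, 0, 0⟩ : ℍ[ℝ]) * (⟨rt, rt, 0, 0⟩ : ℍ[ℝ]) = (⟨(-1), 0, 0, 0⟩ : ℍ[ℝ]) := by
  simp only [QuaternionAlgebra.mk_mul_mk]
  apply Quaternion.ext <;> dsimp only
  · linear_combination ((0 - 2) : ℝ) * hs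
  · linear_combination (0:ℝ) * hs
  · linear_combination (0:ℝ) * hs
  · linear_combination (0:ℝ) * hs

lemma ms15 : (⟨(-rt), rt, 0, 0⟩ : ℍ[ℝ]) * (⟨rt, 0, rt, 0⟩ : ℍ[ℝ]) = (⟨(-(1/2)), (1/2), (-(1/2)), (1/2)⟩ : ℍ[ℝ]) := by
  simp only [QuaternionAlgebra.mk_mul_mk]
  apply Quaternion.ext <;> dsimp only
  · linear_combination ((0 - 1) : ℝ) * hs
  · linear_combination (1 : ℝ) * hs
  · linear_combination ((0 - 1) : ℝ) * hs
  · linear_combination (1 : ℝ) * hs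

lemma ms16 : (⟨0, rt, 0, rt⟩ : ℍ[ℝ]) * (⟨rt, rt, 0, 0⟩ : ℍ[ℝ]) = (⟨(-(1/2)), (1/2), (1/2), (1/2)⟩ : ℍ[ℝ]) := by
  simp only [QuaternionAlgebra.mk_mul_mk]
  apply Quaternion.ext <;> dsimp only
  · linear_combination ((0 - 1) : ℝ) * hs
  · linear_combination (1 : ℝ) * hs
  · linear_combination (1 : ℝ) * hs
  · linear_combination (1 : ℝ) * hs

lemma ms17 : (⟨0, rt, 0, rt⟩ : ℍ[ℝ]) * (⟨rt, 0, rt, 0⟩ : ℍ[ℝ]) = (⟨0, 0, 0, 1⟩ : ℍ[ℝ]) := by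
  simp only [QuaternionAlgebra.mk_mul_mk]
  apply Quaternion.ext <;> dsimp only
  · linear_combination (0:ℝ) * hs
  · linear_combination (0:ℝ) * hs
  · linear_combination (0:ℝ) * hs
  · linear_combination (2 : ℝ) * hs

lemma ms18 : (⟨0, rt, rt, 0⟩ : ℍ[ℝ]) * (⟨rt, rt, 0, 0⟩ : ℍ[ℝ]) = (⟨(-(1/2)), (1/2), (1/2), (-(1/2))⟩ : ℍ[ℝ]) := by
  simp only [QuaternionAlgebra.mk_mul_mk]
  apply Quaternion.ext <;> dsimp only
  · linear_combination ((0 - 1) : ℝ) * hs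
  · linear_combination (1 : ℝ) * hs
  · linear_combination (1 : ℝ) * hs
  · linear_combination ((0 - 1) : ℝ) * hs

lemma ms19 : (⟨0, 0, rt, rt⟩ : ℍ[ℝ]) * (⟨rt, 0, rt, 0⟩ : ℍ[ℝ]) = (⟨(-(1/2)), (-(1/2)), (1/2), (1/2)⟩ : ℍ[ℝ]) := by
  simp only [QuaternionAlgebra.mk_mul_mk]
  apply Quaternion.ext <;> dsimp only
  · linear_combination ((0 - 1) : ℝ) * hs
  · linear_combination ((0 - 1) : ℝ) * hs
  · linear_combination (1 : ℝ) * hs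
  · linear_combination (1 : ℝ) * hs

lemma ms20 : (⟨0, rt, 0, (-rt)⟩ : ℍ[ℝ]) * (⟨rt, rt, 0, 0⟩ : ℍ[ℝ]) = (⟨(-(1/2)), (1/2), (-(1/2)), (-(1/2))⟩ : ℍ[ℝ]) := by
  simp only [QuaternionAlgebra.mk_mul_mk]
  apply Quaternion.ext <;> dsimp only
  · linear_combination ((0 - 1) : ℝ) * hs
  · linear_combination (1 : ℝ) * hs
  · linear_combination ((0 - 1) : ℝ) * hs
  · linear_combination ((0 - 1) : ℝ) * hs

lemma ms21 : (⟨0, 0, rt, (-rt)⟩ : ℍ[ℝ]) * (⟨rt, rt, 0, 0⟩ : ℍ[ℝ]) = (⟨0, 0, 0, (-1)⟩ : ℍ[ℝ]) := by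
  simp only [QuaternionAlgebra.mk_mul_mk]
  apply Quaternion.ext <;> dsimp only
  · linear_combination (0:ℝ) * hs
  · linear_combination (0:ℝ) * hs
  · linear_combination (0:ℝ) * hs
  · linear_combination ((0 - 2) : ℝ) * hs

lemma ms22 : (⟨(-rt), 0, rt, 0⟩ : ℍ[ℝ]) * (⟨rt, rt, 0, 0⟩ : ℍ[ℝ]) = (⟨(-(1/2)), (-(1/2)), (1/2), (-(1/2))⟩ : ℍ[ℝ]) := by
  simp only [QuaternionAlgebra.mk_mul_mk]
  apply Quaternion.ext <;> dsimp only
  · linear_combination ((0 - 1) : ℝ) * hs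
  · linear_combination ((0 - 1) : ℝ) * hs
  · linear_combination (1 : ℝ) * hs
  · linear_combination ((0 - 1) : ℝ) * hs

lemma ms23 : (⟨(-1), 0, 0, 0⟩ : ℍ[ℝ]) * (⟨rt, rt, 0, 0⟩ : ℍ[ℝ]) = (⟨(-rt), (-rt), 0, 0⟩ : ℍ[ℝ]) := by
  simp only [QuaternionAlgebra.mk_mul_mk]
  apply Quaternion.ext <;> dsimp only
  · linear_combination (0:ℝ) * hs
  · linear_combination (0:ℝ) * hs
  · linear_combination (0:ℝ) * hs
  · linear_combination (0:ℝ) * hs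

lemma ms24 : (⟨(-1), 0, 0, 0⟩ : ℍ[ℝ]) * (⟨rt, 0, rt, 0⟩ : ℍ[ℝ]) = (⟨(-rt), 0, (-rt), 0⟩ : ℍ[ℝ]) := by
  simp only [QuaternionAlgebra.mk_mul_mk]
  apply Quaternion.ext <;> dsimp only
  · linear_combination (0:ℝ) * hs
  · linear_combination (0:ℝ) * hs
  · linear_combination (0:ℝ) * hs
  · linear_combination (0:ℝ) * hs

lemma ms25 : (⟨(-(1/2)), (1/2), (-(1/2)), (1/2)⟩ : ℍ[ℝ]) * (⟨rt, rt, 0, 0⟩ : ℍ[ℝ]) = (⟨(-rt), 0, 0, rt⟩ : ℍ[ℝ]) := by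
  simp only [QuaternionAlgebra.mk_mul_mk]
  apply Quaternion.ext <;> dsimp only
  · linear_combination (0:ℝ) * hs
  · linear_combination (0:ℝ) * hs
  · linear_combination (0:ℝ) * hs
  · linear_combination (0:ℝ) * hs

lemma ms26 : (⟨(-(1/2)), (1/2), (-(1/2)), (1/2)⟩ : ℍ[ℝ]) * (⟨rt, 0, rt, 0⟩ : ℍ[ℝ]) = (⟨0, 0, (-rt), rt⟩ : ℍ[ℝ]) := by
  simp only [QuaternionAlgebra.mk_mul_mk]
  apply Quaternion.ext <;> dsimp only
  · linear_combination (0:ℝ) * hs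
  · linear_combination (0:ℝ) * hs
  · linear_combination (0:ℝ) * hs
  · linear_combination (0:ℝ) * hs

lemma ms27 : (⟨0, 0, 0, 1⟩ : ℍ[ℝ]) * (⟨rt, 0, rt, 0⟩ : ℍ[ℝ]) = (⟨0, (-rt), 0, rt⟩ : ℍ[ℝ]) := by
  simp only [QuaternionAlgebra.mk_mul_mk]
  apply Quaternion.ext <;> dsimp only
  · linear_combination (0:ℝ) * hs
  · linear_combination (0:ℝ) * hs
  · linear_combination (0:ℝ) * hs
  · linear_combination (0:ℝ) * hs

lemma ms28 : (⟨(-(1/2)), (1/2), (1/2), (-(1/2))⟩ : ℍ[ℝ]) * (⟨rt, rt, 0, 0⟩ : ℍ[ℝ]) = (⟨(-rt), 0, 0, (-rt)⟩ : ℍ[ℝ]) := by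
  simp only [QuaternionAlgebra.mk_mul_mk]
  apply Quaternion.ext <;> dsimp only
  · linear_combination (0:ℝ) * hs
  · linear_combination (0:ℝ) * hs
  · linear_combination (0:ℝ) * hs
  · linear_combination (0:ℝ) * hs

lemma ms29 : (⟨(-(1/2)), (-(1/2)), (1/2), (1/2)⟩ : ℍ[ℝ]) * (⟨rt, rt, 0, 0⟩ : ℍ[ℝ]) = (⟨0, (-rt), rt, 0⟩ : ℍ[ℝ]) := by
  simp only [QuaternionAlgebra.mk_mul_mk]
  apply Quaternion.ext <;> dsimp only
  · linear_combination (0:ℝ) * hs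
  · linear_combination (0:ℝ) * hs
  · linear_combination (0:ℝ) * hs
  · linear_combination (0:ℝ) * hs

lemma ms30 : (⟨(-(1/2)), (1/2), (-(1/2)), (-(1/2))⟩ : ℍ[ℝ]) * (⟨rt, 0, rt, 0⟩ : ℍ[ℝ]) = (⟨0, rt, (-rt), 0⟩ : ℍ[ℝ]) := by
  simp only [QuaternionAlgebra.mk_mul_mk]
  apply Quaternion.ext <;> dsimp only
  · linear_combination (0:ℝ) * hs
  · linear_combination (0:ℝ) * hs
  · linear_combination (0:ℝ) * hs
  · linear_combination (0:ℝ) * hs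

lemma ms31 : (⟨0, 0, 0, (-1)⟩ : ℍ[ℝ]) * (⟨rt, rt, 0, 0⟩ : ℍ[ℝ]) = (⟨0, 0, (-rt), (-rt)⟩ : ℍ[ℝ]) := by
  simp only [QuaternionAlgebra.mk_mul_mk]
  apply Quaternion.ext <;> dsimp only
  · linear_combination (0:ℝ) * hs
  · linear_combination (0:ℝ) * hs
  · linear_combination (0:ℝ) * hs
  · linear_combination (0:ℝ) * hs

lemma ms32 : (⟨(-(1/2)), (-(1/2)), (1/2), (-(1/2))⟩ : ℍ[ℝ]) * (⟨rt, rt, 0, 0⟩ : ℍ[ℝ]) = (⟨0, (-rt), 0, (-rt)⟩ : ℍ[ℝ]) := by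
  simp only [QuaternionAlgebra.mk_mul_mk]
  apply Quaternion.ext <;> dsimp only
  · linear_combination (0:ℝ) * hs
  · linear_combination (0:ℝ) * hs
  · linear_combination (0:ℝ) * hs
  · linear_combination (0:ℝ) * hs

lemma ms33 : (⟨(-rt), (-rt), 0, 0⟩ : ℍ[ℝ]) * (⟨rt, rt, 0, 0⟩ : ℍ[ℝ]) = (⟨0, (-1), 0, 0⟩ : ℍ[ℝ]) := by
  simp only [QuaternionAlgebra.mk_mul_mk]
  apply Quaternion.ext <;> dsimp only
  · linear_combination (0:ℝ) * hs
  · linear_combination ((0 - 2) : ℝ) * hs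
  · linear_combination (0:ℝ) * hs
  · linear_combination (0:ℝ) * hs

lemma ms34 : (⟨(-rt), (-rt), 0, 0⟩ : ℍ[ℝ]) * (⟨rt, 0, rt, 0⟩ : ℍ[ℝ]) = (⟨(-(1/2)), (-(1/2)), (-(1/2)), (-(1/2))⟩ : ℍ[ℝ]) := by
  simp only [QuaternionAlgebra.mk_mul_mk]
  apply Quaternion.ext <;> dsimp only
  · linear_combination ((0 - 1) : ℝ) * hs
  · linear_combination ((0 - 1) : ℝ) * hs
  · linear_combination ((0 - 1) : ℝ) * hs
  · linear_combination ((0 - 1) : ℝ) * hs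

lemma ms35 : (⟨(-rt), 0, (-rt), 0⟩ : ℍ[ℝ]) * (⟨rt, rt, 0, 0⟩ : ℍ[ℝ]) = (⟨(-(1/2)), (-(1/2)), (-(1/2)), (1/2)⟩ : ℍ[ℝ]) := by
  simp only [QuaternionAlgebra.mk_mul_mk]
  apply Quaternion.ext <;> dsimp only
  · linear_combination ((0 - 1) : ℝ) * hs
  · linear_combination ((0 - 1) : ℝ) * hs
  · linear_combination ((0 - 1) : ℝ) * hs
  · linear_combination (1 : ℝ) * hs

lemma ms36 : (⟨(-rt), 0, (-rt), 0⟩ : ℍ[ℝ]) * (⟨rt, 0, rt, 0⟩ : ℍ[ℝ]) = (⟨0, 0, (-1), 0⟩ : ℍ[ℝ]) := by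
  simp only [QuaternionAlgebra.mk_mul_mk]
  apply Quaternion.ext <;> dsimp only
  · linear_combination (0:ℝ) * hs
  · linear_combination (0:ℝ) * hs
  · linear_combination ((0 - 2) : ℝ) * hs
  · linear_combination (0:ℝ) * hs

lemma ms37 : (⟨0, 0, (-rt), rt⟩ : ℍ[ℝ]) * (⟨rt, 0, rt, 0⟩ : ℍ[ℝ]) = (⟨(1/2), (-(1/2)), (-(1/2)), (1/2)⟩ : ℍ[ℝ]) := by
  simp only [QuaternionAlgebra.mk_mul_mk]
  apply Quaternion.ext <;> dsimp only
  · linear_combination (1 : ℝ) * hs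
  · linear_combination ((0 - 1) : ℝ) * hs
  · linear_combination ((0 - 1) : ℝ) * hs
  · linear_combination (1 : ℝ) * hs

lemma ms38 : (⟨0, (-rt), 0, rt⟩ : ℍ[ℝ]) * (⟨rt, rt, 0, 0⟩ : ℍ[ℝ]) = (⟨(1/2), (-(1/2)), (1/2), (1/2)⟩ : ℍ[ℝ]) := by
  simp only [QuaternionAlgebra.mk_mul_mk]
  apply Quaternion.ext <;> dsimp only
  · linear_combination (1 : ℝ) * hs
  · linear_combination ((0 - 1) : ℝ) * hs
  · linear_combination (1 : ℝ) * hs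
  · linear_combination (1 : ℝ) * hs

lemma ms39 : (⟨0, (-rt), rt, 0⟩ : ℍ[ℝ]) * (⟨rt, rt, 0, 0⟩ : ℍ[ℝ]) = (⟨(1/2), (-(1/2)), (1/2), (-(1/2))⟩ : ℍ[ℝ]) := by
  simp only [QuaternionAlgebra.mk_mul_mk]
  apply Quaternion.ext <;> dsimp only
  · linear_combination (1 : ℝ) * hs
  · linear_combination ((0 - 1) : ℝ) * hs
  · linear_combination (1 : ℝ) * hs
  · linear_combination ((0 - 1) : ℝ) * hs

lemma ms40 : (⟨0, rt, (-rt), 0⟩ : ℍ[ℝ]) * (⟨rt, 0, rt, 0⟩ : ℍ[ℝ]) = (⟨(1/2), (1/2), (-(1/2)), (1/2)⟩ : ℍ[ℝ]) := by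
  simp only [QuaternionAlgebra.mk_mul_mk]
  apply Quaternion.ext <;> dsimp only
  · linear_combination (1 : ℝ) * hs
  · linear_combination (1 : ℝ) * hs
  · linear_combination ((0 - 1) : ℝ) * hs
  · linear_combination (1 : ℝ) * hs

lemma ms41 : (⟨0, 0, (-rt), (-rt)⟩ : ℍ[ℝ]) * (⟨rt, 0, rt, 0⟩ : ℍ[ℝ]) = (⟨(1/2), (1/2), (-(1/2)), (-(1/2))⟩ : ℍ[ℝ]) := by
  simp only [QuaternionAlgebra.mk_mul_mk]
  apply Quaternion.ext <;> dsimp only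
  · linear_combination (1 : ℝ) * hs
  · linear_combination (1 : ℝ) * hs
  · linear_combination ((0 - 1) : ℝ) * hs
  · linear_combination ((0 - 1) : ℝ) * hs

lemma ms42 : (⟨0, (-rt), 0, (-rt)⟩ : ℍ[ℝ]) * (⟨rt, rt, 0, 0⟩ : ℍ[ℝ]) = (⟨(1/2), (-(1/2)), (-(1/2)), (-(1/2))⟩ : ℍ[ℝ]) := by
  simp only [QuaternionAlgebra.mk_mul_mk]
  apply Quaternion.ext <;> dsimp only
  · linear_combination (1 : ℝ) * hs
  · linear_combination ((0 - 1) : ℝ) * hs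
  · linear_combination ((0 - 1) : ℝ) * hs
  · linear_combination ((0 - 1) : ℝ) * hs

lemma ms43 : (⟨0, (-1), 0, 0⟩ : ℍ[ℝ]) * (⟨rt, rt, 0, 0⟩ : ℍ[ℝ]) = (⟨rt, (-rt), 0, 0⟩ : ℍ[ℝ]) := by
  simp only [QuaternionAlgebra.mk_mul_mk]
  apply Quaternion.ext <;> dsimp only
  · linear_combination (0:ℝ) * hs
  · linear_combination (0:ℝ) * hs
  · linear_combination (0:ℝ) * hs
  · linear_combination (0:ℝ) * hs

lemma ms44 : (⟨(-(1/2)), (-(1/2)), (-(1/2)), (-(1/2))⟩ : ℍ[ℝ]) * (⟨rt, rt, 0, 0⟩ : ℍ[ℝ]) = (⟨0, (-rt), (-rt), 0⟩ : ℍ[ℝ]) := by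
  simp only [QuaternionAlgebra.mk_mul_mk]
  apply Quaternion.ext <;> dsimp only
  · linear_combination (0:ℝ) * hs
  · linear_combination (0:ℝ) * hs
  · linear_combination (0:ℝ) * hs
  · linear_combination (0:ℝ) * hs

lemma ms45 : (⟨0, 0, (-1), 0⟩ : ℍ[ℝ]) * (⟨rt, 0, rt, 0⟩ : ℍ[ℝ]) = (⟨rt, 0, (-rt), 0⟩ : ℍ[ℝ]) := by
  simp only [QuaternionAlgebra.mk_mul_mk]
  apply Quaternion.ext <;> dsimp only
  · linear_combination (0:ℝ) * hs
  · linear_combination (0:ℝ) * hs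
  · linear_combination (0:ℝ) * hs
  · linear_combination (0:ℝ) * hs

lemma ms46 : (⟨(1/2), (-(1/2)), (-(1/2)), (1/2)⟩ : ℍ[ℝ]) * (⟨rt, rt, 0, 0⟩ : ℍ[ℝ]) = (⟨rt, 0, 0, rt⟩ : ℍ[ℝ]) := by
  simp only [QuaternionAlgebra.mk_mul_mk]
  apply Quaternion.ext <;> dsimp only
  · linear_combination (0:ℝ) * hs
  · linear_combination (0:ℝ) * hs
  · linear_combination (0:ℝ) * hs
  · linear_combination (0:ℝ) * hs

lemma ms47 : (⟨(1/2), (-(1/2)), (1/2), (-(1/2))⟩ : ℍ[ℝ]) * (⟨rt, rt, 0, 0⟩ : ℍ[ℝ]) = (⟨rt, 0, 0, (-rt)⟩ : ℍ[ℝ]) := by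
  simp only [QuaternionAlgebra.mk_mul_mk]
  apply Quaternion.ext <;> dsimp only
  · linear_combination (0:ℝ) * hs
  · linear_combination (0:ℝ) * hs
  · linear_combination (0:ℝ) * hs
  · linear_combination (0:ℝ) * hs

lemma hqv0 : evq (Wt 0) = qv 0 := by
  show evq [] = qv 0
  rw [show qv 0 = (⟨1, 0, 0, 0⟩ : ℍ[ℝ]) from rfl]
  simp [evq]
  rfl
lemma hqv1 : evq (Wt 1) = qv 1 := by
  calc evq (Wt 1) = evq (Wt 0) * Tq := by
        rw [show Wt 1 = Wt 0 ++ [false] from rfl, evq_append, evq_t]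
    _ = qv 0 * Tq := by rw [hqv0]
    _ = qv 1 := by
        rw [show qv 0 = (⟨1, 0, 0, 0⟩ : ℍ[ℝ]) from rfl, show qv 1 = (⟨rt, rt, 0, 0⟩ : ℍ[ℝ]) from rfl, hTq]
        exact ms1
lemma hqv2 : evq (Wt 2) = qv 2 := by
  calc evq (Wt 2) = evq (Wt 0) * Uq := by
        rw [show Wt 2 = Wt 0 ++ [true] from rfl, evq_append, evq_u]
    _ = qv 0 * Uq := by rw [hqv0]
    _ = qv 2 := by
        rw [show qv 0 = (⟨1, 0, 0, 0⟩ : ℍ[ℝ]) from rfl, show qv 2 = (⟨rt, 0, rt, 0⟩ : ℍ[ℝ]) from rfl, hUq]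
        exact ms2
lemma hqv3 : evq (Wt 3) = qv 3 := by
  calc evq (Wt 3) = evq (Wt 1) * Tq := by
        rw [show Wt 3 = Wt 1 ++ [false] from rfl, evq_append, evq_t]
    _ = qv 1 * Tq := by rw [hqv1]
    _ = qv 3 := by
        rw [show qv 1 = (⟨rt, rt, 0, 0⟩ : ℍ[ℝ]) from rfl, show qv 3 = (⟨0, 1, 0, 0⟩ : ℍ[ℝ]) from rfl, hTq]
        exact ms3
lemma hqv4 : evq (Wt 4) = qv 4 := by
  calc evq (Wt 4) = evq (Wt 1) * Uq := by
        rw [show Wt 4 = Wt 1 ++ [true] from rfl, evq_append, evq_u]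
    _ = qv 1 * Uq := by rw [hqv1]
    _ = qv 4 := by
        rw [show qv 1 = (⟨rt, rt, 0, 0⟩ : ℍ[ℝ]) from rfl, show qv 4 = (⟨(1/2), (1/2), (1/2), (1/2)⟩ : ℍ[ℝ]) from rfl, hUq]
        exact ms4
lemma hqv5 : evq (Wt 5) = qv 5 := by
  calc evq (Wt 5) = evq (Wt 2) * Tq := by
        rw [show Wt 5 = Wt 2 ++ [false] from rfl, evq_append, evq_t]
    _ = qv 2 * Tq := by rw [hqv2]
    _ = qv 5 := by
        rw [show qv 2 = (⟨rt, 0, rt, 0⟩ : ℍ[ℝ]) from rfl, show qv 5 = (⟨(1/2), (1/2), (1/2), (-(1/2))⟩ : ℍ[ℝ]) from rfl, hTq]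
        exact ms5
lemma hqv6 : evq (Wt 6) = qv 6 := by
  calc evq (Wt 6) = evq (Wt 2) * Uq := by
        rw [show Wt 6 = Wt 2 ++ [true] from rfl, evq_append, evq_u]
    _ = qv 2 * Uq := by rw [hqv2]
    _ = qv 6 := by
        rw [show qv 2 = (⟨rt, 0, rt, 0⟩ : ℍ[ℝ]) from rfl, show qv 6 = (⟨0, 0, 1, 0⟩ : ℍ[ℝ]) from rfl, hUq]
        exact ms6
lemma hqv7 : evq (Wt 7) = qv 7 := by
  calc evq (Wt 7) = evq (Wt 3) * Tq := by
        rw [show Wt 7 = Wt 3 ++ [false] from rfl, evq_append, evq_t]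
    _ = qv 3 * Tq := by rw [hqv3]
    _ = qv 7 := by
        rw [show qv 3 = (⟨0, 1, 0, 0⟩ : ℍ[ℝ]) from rfl, show qv 7 = (⟨(-rt), rt, 0, 0⟩ : ℍ[ℝ]) from rfl, hTq]
        exact ms7
lemma hqv8 : evq (Wt 8) = qv 8 := by
  calc evq (Wt 8) = evq (Wt 3) * Uq := by
        rw [show Wt 8 = Wt 3 ++ [true] from rfl, evq_append, evq_u]
    _ = qv 3 * Uq := by rw [hqv3]
    _ = qv 8 := by
        rw [show qv 3 = (⟨0, 1, 0, 0⟩ : ℍ[ℝ]) from rfl, show qv 8 = (⟨0, rt, 0, rt⟩ : ℍ[ℝ]) from rfl, hUq]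
        exact ms8
lemma hqv9 : evq (Wt 9) = qv 9 := by
  calc evq (Wt 9) = evq (Wt 4) * Tq := by
        rw [show Wt 9 = Wt 4 ++ [false] from rfl, evq_append, evq_t]
    _ = qv 4 * Tq := by rw [hqv4]
    _ = qv 9 := by
        rw [show qv 4 = (⟨(1/2), (1/2), (1/2), (1/2)⟩ : ℍ[ℝ]) from rfl, show qv 9 = (⟨0, rt, rt, 0⟩ : ℍ[ℝ]) from rfl, hTq]
        exact ms9
lemma hqv10 : evq (Wt 10) = qv 10 := by
  calc evq (Wt 10) = evq (Wt 4) * Uq := by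
        rw [show Wt 10 = Wt 4 ++ [true] from rfl, evq_append, evq_u]
    _ = qv 4 * Uq := by rw [hqv4]
    _ = qv 10 := by
        rw [show qv 4 = (⟨(1/2), (1/2), (1/2), (1/2)⟩ : ℍ[ℝ]) from rfl, show qv 10 = (⟨0, 0, rt, rt⟩ : ℍ[ℝ]) from rfl, hUq]
        exact ms10
lemma hqv11 : evq (Wt 11) = qv 11 := by
  calc evq (Wt 11) = evq (Wt 5) * Tq := by
        rw [show Wt 11 = Wt 5 ++ [false] from rfl, evq_append, evq_t]
    _ = qv 5 * Tq := by rw [hqv5]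
    _ = qv 11 := by
        rw [show qv 5 = (⟨(1/2), (1/2), (1/2), (-(1/2))⟩ : ℍ[ℝ]) from rfl, show qv 11 = (⟨0, rt, 0, (-rt)⟩ : ℍ[ℝ]) from rfl, hTq]
        exact ms11
lemma hqv12 : evq (Wt 12) = qv 12 := by
  calc evq (Wt 12) = evq (Wt 6) * Tq := by
        rw [show Wt 12 = Wt 6 ++ [false] from rfl, evq_append, evq_t]
    _ = qv 6 * Tq := by rw [hqv6]
    _ = qv 12 := by
        rw [show qv 6 = (⟨0, 0, 1, 0⟩ : ℍ[ℝ]) from rfl, show qv 12 = (⟨0, 0, rt, (-rt)⟩ : ℍ[ℝ]) from rfl, hTq]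
        exact ms12
lemma hqv13 : evq (Wt 13) = qv 13 := by
  calc evq (Wt 13) = evq (Wt 6) * Uq := by
        rw [show Wt 13 = Wt 6 ++ [true] from rfl, evq_append, evq_u]
    _ = qv 6 * Uq := by rw [hqv6]
    _ = qv 13 := by
        rw [show qv 6 = (⟨0, 0, 1, 0⟩ : ℍ[ℝ]) from rfl, show qv 13 = (⟨(-rt), 0, rt, 0⟩ : ℍ[ℝ]) from rfl, hUq]
        exact ms13
lemma hqv14 : evq (Wt 14) = qv 14 := by
  calc evq (Wt 14) = evq (Wt 7) * Tq := by
        rw [show Wt 14 = Wt 7 ++ [false] from rfl, evq_append, evq_t]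
    _ = qv 7 * Tq := by rw [hqv7]
    _ = qv 14 := by
        rw [show qv 7 = (⟨(-rt), rt, 0, 0⟩ : ℍ[ℝ]) from rfl, show qv 14 = (⟨(-1), 0, 0, 0⟩ : ℍ[ℝ]) from rfl, hTq]
        exact ms14
lemma hqv15 : evq (Wt 15) = qv 15 := by
  calc evq (Wt 15) = evq (Wt 7) * Uq := by
        rw [show Wt 15 = Wt 7 ++ [true] from rfl, evq_append, evq_u]
    _ = qv 7 * Uq := by rw [hqv7]
    _ = qv 15 := by
        rw [show qv 7 = (⟨(-rt), rt, 0, 0⟩ : ℍ[ℝ]) from rfl, show qv 15 = (⟨(-(1/2)), (1/2), (-(1/2)), (1/2)⟩ : ℍ[ℝ]) from rfl, hUq]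
        exact ms15
lemma hqv16 : evq (Wt 16) = qv 16 := by
  calc evq (Wt 16) = evq (Wt 8) * Tq := by
        rw [show Wt 16 = Wt 8 ++ [false] from rfl, evq_append, evq_t]
    _ = qv 8 * Tq := by rw [hqv8]
    _ = qv 16 := by
        rw [show qv 8 = (⟨0, rt, 0, rt⟩ : ℍ[ℝ]) from rfl, show qv 16 = (⟨(-(1/2)), (1/2), (1/2), (1/2)⟩ : ℍ[ℝ]) from rfl, hTq]
        exact ms16
lemma hqv17 : evq (Wt 17) = qv 17 := by
  calc evq (Wt 17) = evq (Wt 8) * Uq := by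
        rw [show Wt 17 = Wt 8 ++ [true] from rfl, evq_append, evq_u]
    _ = qv 8 * Uq := by rw [hqv8]
    _ = qv 17 := by
        rw [show qv 8 = (⟨0, rt, 0, rt⟩ : ℍ[ℝ]) from rfl, show qv 17 = (⟨0, 0, 0, 1⟩ : ℍ[ℝ]) from rfl, hUq]
        exact ms17
lemma hqv18 : evq (Wt 18) = qv 18 := by
  calc evq (Wt 18) = evq (Wt 9) * Tq := by
        rw [show Wt 18 = Wt 9 ++ [false] from rfl, evq_append, evq_t]
    _ = qv 9 * Tq := by rw [hqv9]
    _ = qv 18 := by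
        rw [show qv 9 = (⟨0, rt, rt, 0⟩ : ℍ[ℝ]) from rfl, show qv 18 = (⟨(-(1/2)), (1/2), (1/2), (-(1/2))⟩ : ℍ[ℝ]) from rfl, hTq]
        exact ms18
lemma hqv19 : evq (Wt 19) = qv 19 := by
  calc evq (Wt 19) = evq (Wt 10) * Uq := by
        rw [show Wt 19 = Wt 10 ++ [true] from rfl, evq_append, evq_u]
    _ = qv 10 * Uq := by rw [hqv10]
    _ = qv 19 := by
        rw [show qv 10 = (⟨0, 0, rt, rt⟩ : ℍ[ℝ]) from rfl, show qv 19 = (⟨(-(1/2)), (-(1/2)), (1/2), (1/2)⟩ : ℍ[ℝ]) from rfl, hUq]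
        exact ms19
lemma hqv20 : evq (Wt 20) = qv 20 := by
  calc evq (Wt 20) = evq (Wt 11) * Tq := by
        rw [show Wt 20 = Wt 11 ++ [false] from rfl, evq_append, evq_t]
    _ = qv 11 * Tq := by rw [hqv11]
    _ = qv 20 := by
        rw [show qv 11 = (⟨0, rt, 0, (-rt)⟩ : ℍ[ℝ]) from rfl, show qv 20 = (⟨(-(1/2)), (1/2), (-(1/2)), (-(1/2))⟩ : ℍ[ℝ]) from rfl, hTq]
        exact ms20
lemma hqv21 : evq (Wt 21) = qv 21 := by
  calc evq (Wt 21) = evq (Wt 12) * Tq := by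
        rw [show Wt 21 = Wt 12 ++ [false] from rfl, evq_append, evq_t]
    _ = qv 12 * Tq := by rw [hqv12]
    _ = qv 21 := by
        rw [show qv 12 = (⟨0, 0, rt, (-rt)⟩ : ℍ[ℝ]) from rfl, show qv 21 = (⟨0, 0, 0, (-1)⟩ : ℍ[ℝ]) from rfl, hTq]
        exact ms21
lemma hqv22 : evq (Wt 22) = qv 22 := by
  calc evq (Wt 22) = evq (Wt 13) * Tq := by
        rw [show Wt 22 = Wt 13 ++ [false] from rfl, evq_append, evq_t]
    _ = qv 13 * Tq := by rw [hqv13]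
    _ = qv 22 := by
        rw [show qv 13 = (⟨(-rt), 0, rt, 0⟩ : ℍ[ℝ]) from rfl, show qv 22 = (⟨(-(1/2)), (-(1/2)), (1/2), (-(1/2))⟩ : ℍ[ℝ]) from rfl, hTq]
        exact ms22
lemma hqv23 : evq (Wt 23) = qv 23 := by
  calc evq (Wt 23) = evq (Wt 14) * Tq := by
        rw [show Wt 23 = Wt 14 ++ [false] from rfl, evq_append, evq_t]
    _ = qv 14 * Tq := by rw [hqv14]
    _ = qv 23 := by
        rw [show qv 14 = (⟨(-1), 0, 0, 0⟩ : ℍ[ℝ]) from rfl, show qv 23 = (⟨(-rt), (-rt), 0, 0⟩ : ℍ[ℝ]) from rfl, hTq]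
        exact ms23
lemma hqv24 : evq (Wt 24) = qv 24 := by
  calc evq (Wt 24) = evq (Wt 14) * Uq := by
        rw [show Wt 24 = Wt 14 ++ [true] from rfl, evq_append, evq_u]
    _ = qv 14 * Uq := by rw [hqv14]
    _ = qv 24 := by
        rw [show qv 14 = (⟨(-1), 0, 0, 0⟩ : ℍ[ℝ]) from rfl, show qv 24 = (⟨(-rt), 0, (-rt), 0⟩ : ℍ[ℝ]) from rfl, hUq]
        exact ms24
lemma hqv25 : evq (Wt 25) = qv 25 := by
  calc evq (Wt 25) = evq (Wt 15) * Tq := by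
        rw [show Wt 25 = Wt 15 ++ [false] from rfl, evq_append, evq_t]
    _ = qv 15 * Tq := by rw [hqv15]
    _ = qv 25 := by
        rw [show qv 15 = (⟨(-(1/2)), (1/2), (-(1/2)), (1/2)⟩ : ℍ[ℝ]) from rfl, show qv 25 = (⟨(-rt), 0, 0, rt⟩ : ℍ[ℝ]) from rfl, hTq]
        exact ms25
lemma hqv26 : evq (Wt 26) = qv 26 := by
  calc evq (Wt 26) = evq (Wt 15) * Uq := by
        rw [show Wt 26 = Wt 15 ++ [true] from rfl, evq_append, evq_u]
    _ = qv 15 * Uq := by rw [hqv15]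
    _ = qv 26 := by
        rw [show qv 15 = (⟨(-(1/2)), (1/2), (-(1/2)), (1/2)⟩ : ℍ[ℝ]) from rfl, show qv 26 = (⟨0, 0, (-rt), rt⟩ : ℍ[ℝ]) from rfl, hUq]
        exact ms26
lemma hqv27 : evq (Wt 27) = qv 27 := by
  calc evq (Wt 27) = evq (Wt 17) * Uq := by
        rw [show Wt 27 = Wt 17 ++ [true] from rfl, evq_append, evq_u]
    _ = qv 17 * Uq := by rw [hqv17]
    _ = qv 27 := by
        rw [show qv 17 = (⟨0, 0, 0, 1⟩ : ℍ[ℝ]) from rfl, show qv 27 = (⟨0, (-rt), 0, rt⟩ : ℍ[ℝ]) from rfl, hUq]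
        exact ms27
lemma hqv28 : evq (Wt 28) = qv 28 := by
  calc evq (Wt 28) = evq (Wt 18) * Tq := by
        rw [show Wt 28 = Wt 18 ++ [false] from rfl, evq_append, evq_t]
    _ = qv 18 * Tq := by rw [hqv18]
    _ = qv 28 := by
        rw [show qv 18 = (⟨(-(1/2)), (1/2), (1/2), (-(1/2))⟩ : ℍ[ℝ]) from rfl, show qv 28 = (⟨(-rt), 0, 0, (-rt)⟩ : ℍ[ℝ]) from rfl, hTq]
        exact ms28
lemma hqv29 : evq (Wt 29) = qv 29 := by
  calc evq (Wt 29) = evq (Wt 19) * Tq := by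
        rw [show Wt 29 = Wt 19 ++ [false] from rfl, evq_append, evq_t]
    _ = qv 19 * Tq := by rw [hqv19]
    _ = qv 29 := by
        rw [show qv 19 = (⟨(-(1/2)), (-(1/2)), (1/2), (1/2)⟩ : ℍ[ℝ]) from rfl, show qv 29 = (⟨0, (-rt), rt, 0⟩ : ℍ[ℝ]) from rfl, hTq]
        exact ms29
lemma hqv30 : evq (Wt 30) = qv 30 := by
  calc evq (Wt 30) = evq (Wt 20) * Uq := by
        rw [show Wt 30 = Wt 20 ++ [true] from rfl, evq_append, evq_u]
    _ = qv 20 * Uq := by rw [hqv20]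
    _ = qv 30 := by
        rw [show qv 20 = (⟨(-(1/2)), (1/2), (-(1/2)), (-(1/2))⟩ : ℍ[ℝ]) from rfl, show qv 30 = (⟨0, rt, (-rt), 0⟩ : ℍ[ℝ]) from rfl, hUq]
        exact ms30
lemma hqv31 : evq (Wt 31) = qv 31 := by
  calc evq (Wt 31) = evq (Wt 21) * Tq := by
        rw [show Wt 31 = Wt 21 ++ [false] from rfl, evq_append, evq_t]
    _ = qv 21 * Tq := by rw [hqv21]
    _ = qv 31 := by
        rw [show qv 21 = (⟨0, 0, 0, (-1)⟩ : ℍ[ℝ]) from rfl, show qv 31 = (⟨0, 0, (-rt), (-rt)⟩ : ℍ[ℝ]) from rfl, hTq]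
        exact ms31
lemma hqv32 : evq (Wt 32) = qv 32 := by
  calc evq (Wt 32) = evq (Wt 22) * Tq := by
        rw [show Wt 32 = Wt 22 ++ [false] from rfl, evq_append, evq_t]
    _ = qv 22 * Tq := by rw [hqv22]
    _ = qv 32 := by
        rw [show qv 22 = (⟨(-(1/2)), (-(1/2)), (1/2), (-(1/2))⟩ : ℍ[ℝ]) from rfl, show qv 32 = (⟨0, (-rt), 0, (-rt)⟩ : ℍ[ℝ]) from rfl, hTq]
        exact ms32
lemma hqv33 : evq (Wt 33) = qv 33 := by
  calc evq (Wt 33) = evq (Wt 23) * Tq := by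
        rw [show Wt 33 = Wt 23 ++ [false] from rfl, evq_append, evq_t]
    _ = qv 23 * Tq := by rw [hqv23]
    _ = qv 33 := by
        rw [show qv 23 = (⟨(-rt), (-rt), 0, 0⟩ : ℍ[ℝ]) from rfl, show qv 33 = (⟨0, (-1), 0, 0⟩ : ℍ[ℝ]) from rfl, hTq]
        exact ms33
lemma hqv34 : evq (Wt 34) = qv 34 := by
  calc evq (Wt 34) = evq (Wt 23) * Uq := by
        rw [show Wt 34 = Wt 23 ++ [true] from rfl, evq_append, evq_u]
    _ = qv 23 * Uq := by rw [hqv23]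
    _ = qv 34 := by
        rw [show qv 23 = (⟨(-rt), (-rt), 0, 0⟩ : ℍ[ℝ]) from rfl, show qv 34 = (⟨(-(1/2)), (-(1/2)), (-(1/2)), (-(1/2))⟩ : ℍ[ℝ]) from rfl, hUq]
        exact ms34
lemma hqv35 : evq (Wt 35) = qv 35 := by
  calc evq (Wt 35) = evq (Wt 24) * Tq := by
        rw [show Wt 35 = Wt 24 ++ [false] from rfl, evq_append, evq_t]
    _ = qv 24 * Tq := by rw [hqv24]
    _ = qv 35 := by
        rw [show qv 24 = (⟨(-rt), 0, (-rt), 0⟩ : ℍ[ℝ]) from rfl, show qv 35 = (⟨(-(1/2)), (-(1/2)), (-(1/2)), (1/2)⟩ : ℍ[ℝ]) from rfl, hTq]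
        exact ms35
lemma hqv36 : evq (Wt 36) = qv 36 := by
  calc evq (Wt 36) = evq (Wt 24) * Uq := by
        rw [show Wt 36 = Wt 24 ++ [true] from rfl, evq_append, evq_u]
    _ = qv 24 * Uq := by rw [hqv24]
    _ = qv 36 := by
        rw [show qv 24 = (⟨(-rt), 0, (-rt), 0⟩ : ℍ[ℝ]) from rfl, show qv 36 = (⟨0, 0, (-1), 0⟩ : ℍ[ℝ]) from rfl, hUq]
        exact ms36
lemma hqv37 : evq (Wt 37) = qv 37 := by
  calc evq (Wt 37) = evq (Wt 26) * Uq := by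
        rw [show Wt 37 = Wt 26 ++ [true] from rfl, evq_append, evq_u]
    _ = qv 26 * Uq := by rw [hqv26]
    _ = qv 37 := by
        rw [show qv 26 = (⟨0, 0, (-rt), rt⟩ : ℍ[ℝ]) from rfl, show qv 37 = (⟨(1/2), (-(1/2)), (-(1/2)), (1/2)⟩ : ℍ[ℝ]) from rfl, hUq]
        exact ms37
lemma hqv38 : evq (Wt 38) = qv 38 := by
  calc evq (Wt 38) = evq (Wt 27) * Tq := by
        rw [show Wt 38 = Wt 27 ++ [false] from rfl, evq_append, evq_t]
    _ = qv 27 * Tq := by rw [hqv27]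
    _ = qv 38 := by
        rw [show qv 27 = (⟨0, (-rt), 0, rt⟩ : ℍ[ℝ]) from rfl, show qv 38 = (⟨(1/2), (-(1/2)), (1/2), (1/2)⟩ : ℍ[ℝ]) from rfl, hTq]
        exact ms38
lemma hqv39 : evq (Wt 39) = qv 39 := by
  calc evq (Wt 39) = evq (Wt 29) * Tq := by
        rw [show Wt 39 = Wt 29 ++ [false] from rfl, evq_append, evq_t]
    _ = qv 29 * Tq := by rw [hqv29]
    _ = qv 39 := by
        rw [show qv 29 = (⟨0, (-rt), rt, 0⟩ : ℍ[ℝ]) from rfl, show qv 39 = (⟨(1/2), (-(1/2)), (1/2), (-(1/2))⟩ : ℍ[ℝ]) from rfl, hTq]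
        exact ms39
lemma hqv40 : evq (Wt 40) = qv 40 := by
  calc evq (Wt 40) = evq (Wt 30) * Uq := by
        rw [show Wt 40 = Wt 30 ++ [true] from rfl, evq_append, evq_u]
    _ = qv 30 * Uq := by rw [hqv30]
    _ = qv 40 := by
        rw [show qv 30 = (⟨0, rt, (-rt), 0⟩ : ℍ[ℝ]) from rfl, show qv 40 = (⟨(1/2), (1/2), (-(1/2)), (1/2)⟩ : ℍ[ℝ]) from rfl, hUq]
        exact ms40
lemma hqv41 : evq (Wt 41) = qv 41 := by
  calc evq (Wt 41) = evq (Wt 31) * Uq := by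
        rw [show Wt 41 = Wt 31 ++ [true] from rfl, evq_append, evq_u]
    _ = qv 31 * Uq := by rw [hqv31]
    _ = qv 41 := by
        rw [show qv 31 = (⟨0, 0, (-rt), (-rt)⟩ : ℍ[ℝ]) from rfl, show qv 41 = (⟨(1/2), (1/2), (-(1/2)), (-(1/2))⟩ : ℍ[ℝ]) from rfl, hUq]
        exact ms41
lemma hqv42 : evq (Wt 42) = qv 42 := by
  calc evq (Wt 42) = evq (Wt 32) * Tq := by
        rw [show Wt 42 = Wt 32 ++ [false] from rfl, evq_append, evq_t]
    _ = qv 32 * Tq := by rw [hqv32]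
    _ = qv 42 := by
        rw [show qv 32 = (⟨0, (-rt), 0, (-rt)⟩ : ℍ[ℝ]) from rfl, show qv 42 = (⟨(1/2), (-(1/2)), (-(1/2)), (-(1/2))⟩ : ℍ[ℝ]) from rfl, hTq]
        exact ms42
lemma hqv43 : evq (Wt 43) = qv 43 := by
  calc evq (Wt 43) = evq (Wt 33) * Tq := by
        rw [show Wt 43 = Wt 33 ++ [false] from rfl, evq_append, evq_t]
    _ = qv 33 * Tq := by rw [hqv33]
    _ = qv 43 := by
        rw [show qv 33 = (⟨0, (-1), 0, 0⟩ : ℍ[ℝ]) from rfl, show qv 43 = (⟨rt, (-rt), 0, 0⟩ : ℍ[ℝ]) from rfl, hTq]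
        exact ms43
lemma hqv44 : evq (Wt 44) = qv 44 := by
  calc evq (Wt 44) = evq (Wt 34) * Tq := by
        rw [show Wt 44 = Wt 34 ++ [false] from rfl, evq_append, evq_t]
    _ = qv 34 * Tq := by rw [hqv34]
    _ = qv 44 := by
        rw [show qv 34 = (⟨(-(1/2)), (-(1/2)), (-(1/2)), (-(1/2))⟩ : ℍ[ℝ]) from rfl, show qv 44 = (⟨0, (-rt), (-rt), 0⟩ : ℍ[ℝ]) from rfl, hTq]
        exact ms44
lemma hqv45 : evq (Wt 45) = qv 45 := by
  calc evq (Wt 45) = evq (Wt 36) * Uq := by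
        rw [show Wt 45 = Wt 36 ++ [true] from rfl, evq_append, evq_u]
    _ = qv 36 * Uq := by rw [hqv36]
    _ = qv 45 := by
        rw [show qv 36 = (⟨0, 0, (-1), 0⟩ : ℍ[ℝ]) from rfl, show qv 45 = (⟨rt, 0, (-rt), 0⟩ : ℍ[ℝ]) from rfl, hUq]
        exact ms45
lemma hqv46 : evq (Wt 46) = qv 46 := by
  calc evq (Wt 46) = evq (Wt 37) * Tq := by
        rw [show Wt 46 = Wt 37 ++ [false] from rfl, evq_append, evq_t]
    _ = qv 37 * Tq := by rw [hqv37]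
    _ = qv 46 := by
        rw [show qv 37 = (⟨(1/2), (-(1/2)), (-(1/2)), (1/2)⟩ : ℍ[ℝ]) from rfl, show qv 46 = (⟨rt, 0, 0, rt⟩ : ℍ[ℝ]) from rfl, hTq]
        exact ms46
lemma hqv47 : evq (Wt 47) = qv 47 := by
  calc evq (Wt 47) = evq (Wt 39) * Tq := by
        rw [show Wt 47 = Wt 39 ++ [false] from rfl, evq_append, evq_t]
    _ = qv 39 * Tq := by rw [hqv39]
    _ = qv 47 := by
        rw [show qv 39 = (⟨(1/2), (-(1/2)), (1/2), (-(1/2))⟩ : ℍ[ℝ]) from rfl, show qv 47 = (⟨rt, 0, 0, (-rt)⟩ : ℍ[ℝ]) from rfl, hTq]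
        exact ms47

lemma hqvAll : ∀ i, evq (Wt i) = qv i := by
  intro i
  fin_cases i
  · exact hqv0
  · exact hqv1
  · exact hqv2
  · exact hqv3
  · exact hqv4
  · exact hqv5
  · exact hqv6
  · exact hqv7
  · exact hqv8
  · exact hqv9
  · exact hqv10
  · exact hqv11
  · exact hqv12
  · exact hqv13
  · exact hqv14
  · exact hqv15
  · exact hqv16
  · exact hqv17
  · exact hqv18
  · exact hqv19
  · exact hqv20
  · exact hqv21
  · exact hqv22
  · exact hqv23
  · exact hqv24
  · exact hqv25
  · exact hqv26
  · exact hqv27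
  · exact hqv28
  · exact hqv29
  · exact hqv30
  · exact hqv31
  · exact hqv32
  · exact hqv33
  · exact hqv34
  · exact hqv35
  · exact hqv36
  · exact hqv37
  · exact hqv38
  · exact hqv39
  · exact hqv40
  · exact hqv41
  · exact hqv42
  · exact hqv43
  · exact hqv44
  · exact hqv45
  · exact hqv46
  · exact hqv47

lemma pm1 : (⟨rt, rt, 0, 0⟩ : ℍ[ℝ]) * (⟨rt, 0, rt, 0⟩ : ℍ[ℝ]) * (⟨rt, 0, rt, 0⟩ : ℍ[ℝ]) * (⟨rt, rt, 0, 0⟩ : ℍ[ℝ]) = (⟨0, 0, 1, 0⟩ : ℍ[ℝ]) := by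
  simp only [QuaternionAlgebra.mk_mul_mk]
  apply Quaternion.ext <;> dsimp only
  · linear_combination (0:ℝ) * hs
  · linear_combination (0:ℝ) * hs
  · linear_combination (2 + 4 * rt^2 : ℝ) * hs
  · linear_combination (0:ℝ) * hs

lemma pm2 : (⟨rt, rt, 0, 0⟩ : ℍ[ℝ]) * (⟨rt, 0, rt, 0⟩ : ℍ[ℝ]) * (⟨rt, rt, 0, 0⟩ : ℍ[ℝ]) = (⟨0, rt, rt, 0⟩ : ℍ[ℝ]) := by
  simp only [QuaternionAlgebra.mk_mul_mk]
  apply Quaternion.ext <;> dsimp only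
  · linear_combination (0:ℝ) * hs
  · linear_combination (2 * rt : ℝ) * hs
  · linear_combination (2 * rt : ℝ) * hs
  · linear_combination (0:ℝ) * hs

lemma pm3 : (⟨rt, 0, rt, 0⟩ : ℍ[ℝ]) * (⟨rt, rt, 0, 0⟩ : ℍ[ℝ]) * (⟨rt, 0, rt, 0⟩ : ℍ[ℝ]) = (⟨0, rt, rt, 0⟩ : ℍ[ℝ]) := by
  simp only [QuaternionAlgebra.mk_mul_mk]
  apply Quaternion.ext <;> dsimp only
  · linear_combination (0:ℝ) * hs
  · linear_combination (2 * rt : ℝ) * hs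
  · linear_combination (2 * rt : ℝ) * hs
  · linear_combination (0:ℝ) * hs

lemma pm4 : (⟨rt, 0, rt, 0⟩ : ℍ[ℝ]) * (⟨rt, 0, rt, 0⟩ : ℍ[ℝ]) = (⟨0, 0, 1, 0⟩ : ℍ[ℝ]) := by
  simp only [QuaternionAlgebra.mk_mul_mk]
  apply Quaternion.ext <;> dsimp only
  · linear_combination (0:ℝ) * hs
  · linear_combination (0:ℝ) * hs
  · linear_combination (2 : ℝ) * hs
  · linear_combination (0:ℝ) * hs

lemma pm5 : (⟨rt, rt, 0, 0⟩ : ℍ[ℝ]) * (⟨rt, 0, rt, 0⟩ : ℍ[ℝ]) * (⟨rt, rt, 0, 0⟩ : ℍ[ℝ]) * (⟨rt, 0, rt, 0⟩ : ℍ[ℝ]) = (⟨(-(1/2)), (1/2), (1/2), (1/2)⟩ : ℍ[ℝ]) := by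
  simp only [QuaternionAlgebra.mk_mul_mk]
  apply Quaternion.ext <;> dsimp only
  · linear_combination ((0 - 1) + (0 - 2) * rt^2 : ℝ) * hs
  · linear_combination (1 + 2 * rt^2 : ℝ) * hs
  · linear_combination (1 + 2 * rt^2 : ℝ) * hs
  · linear_combination (1 + 2 * rt^2 : ℝ) * hs

lemma pm6 : (⟨rt, rt, 0, 0⟩ : ℍ[ℝ]) * (⟨rt, rt, 0, 0⟩ : ℍ[ℝ]) * (⟨rt, rt, 0, 0⟩ : ℍ[ℝ]) * (⟨(-(1/2)), (1/2), (1/2), (1/2)⟩ : ℍ[ℝ]) * (⟨(-(1/2)), (1/2), (1/2), (1/2)⟩ : ℍ[ℝ]) = (⟨rt, 0, rt, 0⟩ : ℍ[ℝ]) := by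
  simp only [QuaternionAlgebra.mk_mul_mk]
  apply Quaternion.ext <;> dsimp only
  · linear_combination (2 * rt : ℝ) * hs
  · linear_combination (0:ℝ) * hs
  · linear_combination (2 * rt : ℝ) * hs
  · linear_combination (0:ℝ) * hs
/-! ### The homomorphism to the quaternions -/

noncomputable def uU : ℍ[ℝ]ˣ := Units.mk0 Uq (by
  refine mul_ne_zero (inv_ne_zero ?_) ?_
  · rw [show ((0:ℍ[ℝ])) = ((0:ℝ):ℍ[ℝ]) from rfl, Ne, Quaternion.coe_inj]
    exact Real.sqrt_ne_zero'.mpr (by norm_num : (0:ℝ) < 2)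
  · intro h
    have h' := congrArg (fun x : ℍ[ℝ] => x.re) h
    change (1:ℝ) + 0 = 0 at h'
    norm_num at h')

noncomputable def gq : Fin 2 → ℍ[ℝ]ˣ := ![uγ, uU]

lemma pa : Tq * Uq ^ 2 * Tq = Uq ^ 2 := by
  rw [pow_two, hTq, hUq]; erw [← mul_assoc, pm1, pm4]

lemma pb : Tq * Uq * Tq = Uq * Tq * Uq := by
  rw [hTq, hUq]; erw [pm2, pm3]

lemma hrels : ∀ r ∈ octRels, FreeGroup.lift gq r = 1 := by
  intro r hr
  rcases hr with h | h <;> subst h <;>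
    rw [map_mul, map_mul, map_mul, map_inv] <;>
    rw [mul_inv_eq_one] <;>
    simp only [map_mul, map_pow, FreeGroup.lift_apply_of, gq, Matrix.cons_val_zero, Matrix.cons_val_one,
      Matrix.head_cons] <;>
    refine Units.ext ?_ <;>
    simp only [Units.val_mul, Units.val_pow_eq_pow_val, Units.val_mk0] <;>
    first
      | exact pa
      | exact pb

noncomputable def f : P →* ℍ[ℝ]ˣ := PresentedGroup.toGroup hrels

lemma f_of0 : f tP = uγ := by
  rw [show f = PresentedGroup.toGroup hrels from rfl, tP, PresentedGroup.toGroup.of]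
  simp [gq]

lemma f_of1 : f uP = uU := by
  rw [show f = PresentedGroup.toGroup hrels from rfl, uP, PresentedGroup.toGroup.of]
  simp [gq]

lemma fev (L : List Bool) : ((f (ev L) : ℍ[ℝ]ˣ) : ℍ[ℝ]) = evq L := by
  induction L with
  | nil => simp [ev, evq]
  | cons x L ih =>
    cases x
    · rw [ev_t, map_mul, Units.val_mul, f_of0, show evq (false :: L) = Tq * evq L by simp [evq], ih]
      rfl
    · rw [ev_u, map_mul, Units.val_mul, f_of1, show evq (true :: L) = Uq * evq L by simp [evq], ih]
      rfl

/-! ### Injectivity -/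

lemma vinj : Function.Injective vv := by
  have hlt : Real.sqrt 2 < 2 := by
    nlinarith [Real.sq_sqrt (show (0:ℝ) ≤ 2 by norm_num), Real.sqrt_nonneg 2]
  have hgt : 1 < Real.sqrt 2 := by
    nlinarith [Real.sq_sqrt (show (0:ℝ) ≤ 2 by norm_num), Real.sqrt_nonneg 2]
  have h1 : (1/2:ℝ) < rt := by
    rw [rt, show (1/2:ℝ) = 2⁻¹ by norm_num]
    exact inv_strictAnti₀ (by positivity) hlt
  have h2 : rt < 1 := by
    rw [rt, show (1:ℝ) = 1⁻¹ by norm_num]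
    exact inv_strictAnti₀ one_pos hgt
  intro a b h
  fin_cases a <;> fin_cases b <;>
    first
      | rfl
      | (exfalso; simp only [vv] at h; linarith)

lemma tblinj : ∀ i j : Fin 48, cA i = cA j → cB i = cB j → cC i = cC j → cD i = cD j → i = j := by
  decide

lemma qvinj : Function.Injective qv := by
  intro i j h
  rw [qv, qv] at h
  injection h with h1 h2 h3 h4
  exact tblinj i j (vinj h1) (vinj h2) (vinj h3) (vinj h4)

/-! ### Every element is an `FF i` -/

noncomputable def KS : Subgroup P where
  carrier := {g | ∃ σ : Equiv.Perm (Fin 48), ∀ i, g * FF i = FF (σ i)}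
  one_mem' := ⟨Equiv.refl _, fun i => by simp⟩
  mul_mem' := by
    rintro g h ⟨σ, hσ⟩ ⟨τ, hτ⟩
    exact ⟨τ.trans σ, fun i => by rw [Equiv.trans_apply, mul_assoc, hτ, hσ]⟩
  inv_mem' := by
    rintro g ⟨σ, hσ⟩
    refine ⟨σ.symm, fun i => ?_⟩
    rw [inv_mul_eq_iff_eq_mul, hσ (σ.symm i), Equiv.apply_symm_apply]

lemma allF (g : P) : ∃ i, g = FF i := by
  have hg : g ∈ KS := by
    refine PresentedGroup.generated_by octRels KS ?_ g
    intro j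
    fin_cases j
    · exact ⟨Equiv.ofBijective sgT (by decide), htF⟩
    · exact ⟨Equiv.ofBijective sgU (by decide), huF⟩
  obtain ⟨σ, hσ⟩ := hg
  have h0 := hσ 0
  rw [show FF 0 = 1 from rfl, mul_one] at h0
  exact ⟨σ 0, h0⟩

lemma f_inj : Function.Injective f := by
  intro x y h
  obtain ⟨i, rfl⟩ := allF x
  obtain ⟨j, rfl⟩ := allF y
  have hq : qv i = qv j := by
    rw [← hqvAll i, ← hqvAll j, ← fev, ← fev]
    exact congrArg Units.val h
  rw [qvinj hq]

/-! ### The range is `binO` -/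

lemma m1 : uϖ = (uγ * uU) ^ 2 := by
  refine Units.ext ?_
  show ϖ = ((uγ * uU) ^ 2 : ℍ[ℝ]ˣ).val
  simp only [Units.val_pow_eq_pow_val, Units.val_mul]
  show ϖ = (Tq * Uq) ^ 2
  rw [pow_two, hTq, hUq]; erw [← mul_assoc, pm5]
  rfl

lemma m2 : uU = uγ ^ 3 * uϖ ^ 2 := by
  refine Units.ext ?_
  show Uq = ((uγ ^ 3 * uϖ ^ 2 : ℍ[ℝ]ˣ) : ℍ[ℝ])
  simp only [Units.val_mul, Units.val_pow_eq_pow_val]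
  show Uq = Tq ^ 3 * ϖ ^ 2
  rw [pow_succ, pow_two, pow_two, hTq, hUq, ← mul_assoc,
    show ϖ = (⟨-(1/2), 1/2, 1/2, 1/2⟩ : ℍ[ℝ]) from rfl]
  exact pm6.symm

lemma hA1 : uγ ∈ Subgroup.closure ({uϖ, uγ} : Set ℍ[ℝ]ˣ) :=
  Subgroup.subset_closure (Set.mem_insert_of_mem _ rfl)
lemma hA2 : uϖ ∈ Subgroup.closure ({uϖ, uγ} : Set ℍ[ℝ]ˣ) :=
  Subgroup.subset_closure (Set.mem_insert _ _)
lemma hA3 : uU ∈ Subgroup.closure ({uϖ, uγ} : Set ℍ[ℝ]ˣ) := by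
  rw [m2]; exact mul_mem (pow_mem hA1 3) (pow_mem hA2 2)
lemma hB1 : uγ ∈ Subgroup.closure ({uγ, uU} : Set ℍ[ℝ]ˣ) :=
  Subgroup.subset_closure (Set.mem_insert _ _)
lemma hB2 : uU ∈ Subgroup.closure ({uγ, uU} : Set ℍ[ℝ]ˣ) :=
  Subgroup.subset_closure (Set.mem_insert_of_mem _ rfl)
lemma hB3 : uϖ ∈ Subgroup.closure ({uγ, uU} : Set ℍ[ℝ]ˣ) := by
  rw [m1]; exact pow_mem (mul_mem hB1 hB2) 2

lemma range_f : f.range = binO := by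
  have h1 : (⊤ : Subgroup P) = Subgroup.closure (Set.range PresentedGroup.of) :=
    (PresentedGroup.closure_range_of octRels).symm
  rw [MonoidHom.range_eq_map, h1, MonoidHom.map_closure]
  have h2 : Set.range (PresentedGroup.of : Fin 2 → P) = {tP, uP} := by
    ext x; simp [Fin.exists_fin_two, Set.mem_insert_iff, eq_comm, tP, uP]
  rw [h2, Set.image_insert_eq, Set.image_singleton, f_of0, f_of1, binO]
  apply le_antisymm
  · rw [Subgroup.closure_le]
    rintro x hx
    rcases hx with rfl | rfl
    · exact SetLike.mem_coe.mpr hA1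
    · exact SetLike.mem_coe.mpr hA3
  · rw [Subgroup.closure_le]
    rintro x hx
    rcases hx with rfl | rfl
    · exact SetLike.mem_coe.mpr hB3
    · exact SetLike.mem_coe.mpr hB1

/-! ### Conclusion -/

noncomputable def fB : P →* binO :=
  f.codRestrict binO (fun x => by rw [← range_f]; exact ⟨x, rfl⟩)

lemma fB_bij : Function.Bijective fB := by
  constructor
  · intro x y h
    apply f_inj
    have := congrArg (Subtype.val) h
    exact this
  · rintro ⟨y, hy⟩
    rw [← range_f] at hy
    obtain ⟨x, hx⟩ := hy
    exact ⟨x, Subtype.ext hx⟩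

noncomputable def eIso : P ≃* binO := MulEquiv.ofBijective fB fB_bij

/-- The binary octahedral group admits the presentation `⟨T, U | TU²T = U², TUT = UTU⟩` via
`T ↦ (1+i)/√2`, `U ↦ (1+j)/√2`; in particular these two quaternions satisfy the relations. -/
theorem binaryOctahedral_presentation :
    (Tq * Uq ^ 2 * Tq = Uq ^ 2 ∧ Tq * Uq * Tq = Uq * Tq * Uq) ∧
    ∃ e : PresentedGroup octRels ≃* binO,
      ((e (PresentedGroup.of 0) : ℍ[ℝ]ˣ) : ℍ[ℝ]) = Tq ∧
      ((e (PresentedGroup.of 1) : ℍ[ℝ]ˣ) : ℍ[ℝ]) = Uq := by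
  refine ⟨⟨pa, pb⟩, ⟨eIso, ?_, ?_⟩⟩
  · show ((fB (PresentedGroup.of 0) : ℍ[ℝ]ˣ) : ℍ[ℝ]) = Tq
    rw [show (fB (PresentedGroup.of 0) : ℍ[ℝ]ˣ) = f tP from rfl, f_of0]
    rfl
  · show ((fB (PresentedGroup.of 1) : ℍ[ℝ]ˣ) : ℍ[ℝ]) = Uq
    rw [show (fB (PresentedGroup.of 1) : ℍ[ℝ]ˣ) = f uP from rfl, f_of1]
    rfl
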